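/- arXiv:1911.02555 — 9 statements merged into one kernel-verified Lean document; each statement's English description precedes it below -/
import Mathlib

section
/- Let 𝒫 be the set of 15 two‑qubit Pauli strings, i.e., Kronecker products P ⊗ Q with P, Q ∈ {1, X, Y, Z} (4×4 complex matrices), excluding 1 ⊗ 1. Define M₁ = {X⊗1, Y⊗1, Z⊗X, Z⊗Y, Z⊗Z}, M₂ = {X⊗1, Z⊗1, Y⊗X, Y⊗Y, Y⊗Z}, M₃ = {Y⊗1, Z⊗1, X⊗X, X⊗Y, X⊗Z}, M₄ = {1⊗X, 1⊗Y, X⊗Z, Y⊗Z, Z⊗Z}, M₅ = {1⊗X, 1⊗Z, X⊗Y, Y⊗Y, Z⊗Y}, M₆ = {1⊗Y, 1⊗Z, X⊗X, Y⊗X, Z⊗X}. Then a 5-element subset T ⊆ 𝒫 satisfies A * B = −(B * A) for all distinct A, B ∈ T (i.e., T is pairwise anticommuting) if and only if T is one of M₁, M₂, M₃, M₄, M₅, M₆. -/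
/-!
Label `1, X, Y, Z` by `0, 1, 2, 3` and the string `P ⊗ Q` by its pair of labels. Two one-qubit
Paulis anticommute exactly when they are distinct and both non-identity, and otherwise commute;
the Kronecker product multiplies these signs, so two strings anticommute exactly when their
factors anticommute in exactly one slot. Strings with distinct labels are trace-orthogonal,
hence distinct, so the theorem becomes a statement about 5-element sets of labels, which is
settled by running through the 5-element sublists of the 16 labels.
-/

open Kronecker

namespace Stmt2

/-- The Pauli matrix `X`. -/
noncomputable def σx : Matrix (Fin 2) (Fin 2) ℂ := !![0, 1; 1, 0]

/-- The Pauli matrix `Y`. -/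
noncomputable def σy : Matrix (Fin 2) (Fin 2) ℂ := !![0, -Complex.I; Complex.I, 0]

/-- The Pauli matrix `Z`. -/
noncomputable def σz : Matrix (Fin 2) (Fin 2) ℂ := !![1, 0; 0, -1]

/-- The set `{1, X, Y, Z}` of one-qubit Pauli matrices. -/
noncomputable def pauli1 : Set (Matrix (Fin 2) (Fin 2) ℂ) := {1, σx, σy, σz}

/-- The set `𝒫` of the 15 two-qubit Pauli strings: Kronecker products `P ⊗ Q` with
`P, Q ∈ {1, X, Y, Z}`, excluding `1 ⊗ 1`. -/
noncomputable def pauliStrings : Set (Matrix (Fin 2 × Fin 2) (Fin 2 × Fin 2) ℂ) :=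
  {A | (∃ P ∈ pauli1, ∃ Q ∈ pauli1, A = P ⊗ₖ Q) ∧
    A ≠ (1 : Matrix (Fin 2) (Fin 2) ℂ) ⊗ₖ (1 : Matrix (Fin 2) (Fin 2) ℂ)}

noncomputable def M₁ : Set (Matrix (Fin 2 × Fin 2) (Fin 2 × Fin 2) ℂ) :=
  {σx ⊗ₖ 1, σy ⊗ₖ 1, σz ⊗ₖ σx, σz ⊗ₖ σy, σz ⊗ₖ σz}

noncomputable def M₂ : Set (Matrix (Fin 2 × Fin 2) (Fin 2 × Fin 2) ℂ) :=
  {σx ⊗ₖ 1, σz ⊗ₖ 1, σy ⊗ₖ σx, σy ⊗ₖ σy, σy ⊗ₖ σz}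

noncomputable def M₃ : Set (Matrix (Fin 2 × Fin 2) (Fin 2 × Fin 2) ℂ) :=
  {σy ⊗ₖ 1, σz ⊗ₖ 1, σx ⊗ₖ σx, σx ⊗ₖ σy, σx ⊗ₖ σz}

noncomputable def M₄ : Set (Matrix (Fin 2 × Fin 2) (Fin 2 × Fin 2) ℂ) :=
  {(1 : Matrix (Fin 2) (Fin 2) ℂ) ⊗ₖ σx, (1 : Matrix (Fin 2) (Fin 2) ℂ) ⊗ₖ σy,
    σx ⊗ₖ σz, σy ⊗ₖ σz, σz ⊗ₖ σz}

noncomputable def M₅ : Set (Matrix (Fin 2 × Fin 2) (Fin 2 × Fin 2) ℂ) :=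
  {(1 : Matrix (Fin 2) (Fin 2) ℂ) ⊗ₖ σx, (1 : Matrix (Fin 2) (Fin 2) ℂ) ⊗ₖ σz,
    σx ⊗ₖ σy, σy ⊗ₖ σy, σz ⊗ₖ σy}

noncomputable def M₆ : Set (Matrix (Fin 2 × Fin 2) (Fin 2 × Fin 2) ℂ) :=
  {(1 : Matrix (Fin 2) (Fin 2) ℂ) ⊗ₖ σy, (1 : Matrix (Fin 2) (Fin 2) ℂ) ⊗ₖ σz,
    σx ⊗ₖ σx, σy ⊗ₖ σx, σz ⊗ₖ σx}

noncomputable def pauli : Fin 4 → Matrix (Fin 2) (Fin 2) ℂ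
  | 0 => 1
  | 1 => σx
  | 2 => σy
  | 3 => σz

noncomputable def pauliString (a : Fin 4 × Fin 4) : Matrix (Fin 2 × Fin 2) (Fin 2 × Fin 2) ℂ :=
  pauli a.1 ⊗ₖ pauli a.2

def PauliAnticomm (i j : Fin 4) : Prop := i ≠ 0 ∧ j ≠ 0 ∧ i ≠ j

instance : DecidableRel PauliAnticomm := fun _ _ => inferInstanceAs (Decidable (_ ∧ _ ∧ _))

def StringAnticomm (a b : Fin 4 × Fin 4) : Prop :=
  Xor (PauliAnticomm a.1 b.1) (PauliAnticomm a.2 b.2)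

instance : DecidableRel StringAnticomm := fun _ _ => inferInstanceAs (Decidable (Xor _ _))

instance : Std.Symm StringAnticomm := ⟨by decide⟩

lemma range_pauli : Set.range pauli = pauli1 := by
  ext P
  simp [pauli1, Fin.exists_fin_succ, pauli, eq_comm]

lemma pauliStrings_subset_range : pauliStrings ⊆ Set.range pauliString := by
  rintro A ⟨⟨P, hP, Q, hQ, rfl⟩, -⟩
  obtain ⟨i, rfl⟩ := range_pauli ▸ hP
  obtain ⟨j, rfl⟩ := range_pauli ▸ hQ
  exact ⟨(i, j), rfl⟩

lemma pauli_mul_self (i : Fin 4) : pauli i * pauli i = 1 := by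
  fin_cases i <;> simp [pauli, σx, σy, σz, Matrix.one_fin_two]

lemma pauli_mul_comm (i j : Fin 4) :
    pauli i * pauli j = (if PauliAnticomm i j then -1 else 1 : ℂ) • (pauli j * pauli i) := by
  fin_cases i <;> fin_cases j <;> simp [PauliAnticomm, pauli, σx, σy, σz, Matrix.one_fin_two]

lemma trace_pauli_mul_pauli {i j : Fin 4} (h : i ≠ j) : (pauli i * pauli j).trace = 0 := by
  fin_cases i <;> fin_cases j <;>
    simp_all [pauli, σx, σy, σz, Matrix.one_fin_two, Matrix.trace_fin_two]

lemma pauliString_mul_self (a : Fin 4 × Fin 4) : pauliString a * pauliString a = 1 := by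
  rw [pauliString, ← Matrix.mul_kronecker_mul, pauli_mul_self, pauli_mul_self,
    Matrix.one_kronecker_one]

lemma trace_pauliString_mul_pauliString {a b : Fin 4 × Fin 4} (h : a ≠ b) :
    (pauliString a * pauliString b).trace = 0 := by
  rw [pauliString, pauliString, ← Matrix.mul_kronecker_mul, Matrix.trace_kronecker]
  by_cases h₁ : a.1 = b.1
  · rw [trace_pauli_mul_pauli fun h₂ => h (Prod.ext h₁ h₂), mul_zero]
  · rw [trace_pauli_mul_pauli h₁, zero_mul]

lemma pauliString_injective : Function.Injective pauliString := by
  intro a b hab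
  by_contra h
  have := trace_pauliString_mul_pauliString h
  rw [hab, pauliString_mul_self, Matrix.trace_one] at this
  norm_num at this

lemma pauliString_mul_comm (a b : Fin 4 × Fin 4) :
    pauliString a * pauliString b =
      ((if PauliAnticomm a.1 b.1 then -1 else 1 : ℂ) * (if PauliAnticomm a.2 b.2 then -1 else 1)) •
        (pauliString b * pauliString a) := by
  rw [pauliString, pauliString, ← Matrix.mul_kronecker_mul, pauli_mul_comm, pauli_mul_comm a.2,
    Matrix.smul_kronecker, Matrix.kronecker_smul, smul_smul, Matrix.mul_kronecker_mul]

lemma pauliString_anticomm_iff (a b : Fin 4 × Fin 4) :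
    pauliString a * pauliString b = -(pauliString b * pauliString a) ↔ StringAnticomm a b := by
  have hinv : pauliString b * pauliString a * (pauliString a * pauliString b) = 1 := by
    rw [mul_assoc, ← mul_assoc (pauliString a), pauliString_mul_self, one_mul,
      pauliString_mul_self]
  have hne : pauliString b * pauliString a ≠ -(pauliString b * pauliString a) := by
    rw [Ne, eq_neg_iff_add_eq_zero, ← two_smul ℂ, smul_eq_zero, not_or]
    refine ⟨two_ne_zero, fun h => ?_⟩
    rw [h, zero_mul] at hinv
    exact zero_ne_one hinv
  rw [pauliString_mul_comm, StringAnticomm]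
  by_cases h₁ : PauliAnticomm a.1 b.1 <;> by_cases h₂ : PauliAnticomm a.2 b.2 <;>
    simp [h₁, h₂, hne]

lemma pairwise_anticomm_image_iff (S : Set (Fin 4 × Fin 4)) :
    (pauliString '' S).Pairwise (fun A B => A * B = -(B * A)) ↔ S.Pairwise StringAnticomm := by
  have hrel : Function.onFun (fun A B => A * B = -(B * A)) pauliString = StringAnticomm :=
    funext₂ fun a b => propext (pauliString_anticomm_iff a b)
  rw [pauliString_injective.injOn.pairwise_image, hrel]

def pauliLabels : List (Fin 4 × Fin 4) := List.finRange 4 ×ˢ List.finRange 4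

lemma mem_pauliLabels (a : Fin 4 × Fin 4) : a ∈ pauliLabels :=
  List.mem_product.2 ⟨List.mem_finRange _, List.mem_finRange _⟩

lemma nodup_pauliLabels : pauliLabels.Nodup :=
  (List.nodup_finRange 4).product (List.nodup_finRange 4)

def labelsM₁ : Finset (Fin 4 × Fin 4) := {(1, 0), (2, 0), (3, 1), (3, 2), (3, 3)}
def labelsM₂ : Finset (Fin 4 × Fin 4) := {(1, 0), (3, 0), (2, 1), (2, 2), (2, 3)}
def labelsM₃ : Finset (Fin 4 × Fin 4) := {(2, 0), (3, 0), (1, 1), (1, 2), (1, 3)}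
def labelsM₄ : Finset (Fin 4 × Fin 4) := {(0, 1), (0, 2), (1, 3), (2, 3), (3, 3)}
def labelsM₅ : Finset (Fin 4 × Fin 4) := {(0, 1), (0, 3), (1, 2), (2, 2), (3, 2)}
def labelsM₆ : Finset (Fin 4 × Fin 4) := {(0, 2), (0, 3), (1, 1), (2, 1), (3, 1)}

set_option maxRecDepth 100000 in
lemma pairwise_stringAnticomm_iff_of_mem_sublistsLen :
    ∀ s ∈ pauliLabels.sublistsLen 5, s.Pairwise StringAnticomm ↔
      s.toFinset = labelsM₁ ∨ s.toFinset = labelsM₂ ∨ s.toFinset = labelsM₃ ∨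
        s.toFinset = labelsM₄ ∨ s.toFinset = labelsM₅ ∨ s.toFinset = labelsM₆ := by
  decide +kernel

lemma pairwise_stringAnticomm_iff_of_card_eq_five {S : Finset (Fin 4 × Fin 4)} (hS : S.card = 5) :
    (S : Set (Fin 4 × Fin 4)).Pairwise StringAnticomm ↔
      S = labelsM₁ ∨ S = labelsM₂ ∨ S = labelsM₃ ∨ S = labelsM₄ ∨ S = labelsM₅ ∨ S = labelsM₆ := by
  set s := pauliLabels.filter (· ∈ S)
  have hnodup : s.Nodup := nodup_pauliLabels.filter _
  have hsS : s.toFinset = S := by ext a; simp [s, mem_pauliLabels]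
  have hlen : s.length = 5 := by rw [← List.toFinset_card_of_nodup hnodup, hsS, hS]
  rw [← hsS, List.coe_toFinset, hnodup.pairwise_coe]
  exact pairwise_stringAnticomm_iff_of_mem_sublistsLen s
    (List.mem_sublistsLen.2 ⟨List.filter_sublist, hlen⟩)

lemma M₁_eq_image : M₁ = pauliString '' labelsM₁ := by
  simp only [labelsM₁, Finset.coe_insert, Finset.coe_singleton, Set.image_insert_eq,
    Set.image_singleton]
  rfl

lemma M₂_eq_image : M₂ = pauliString '' labelsM₂ := by
  simp only [labelsM₂, Finset.coe_insert, Finset.coe_singleton, Set.image_insert_eq,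
    Set.image_singleton]
  rfl

lemma M₃_eq_image : M₃ = pauliString '' labelsM₃ := by
  simp only [labelsM₃, Finset.coe_insert, Finset.coe_singleton, Set.image_insert_eq,
    Set.image_singleton]
  rfl

lemma M₄_eq_image : M₄ = pauliString '' labelsM₄ := by
  simp only [labelsM₄, Finset.coe_insert, Finset.coe_singleton, Set.image_insert_eq,
    Set.image_singleton]
  rfl

lemma M₅_eq_image : M₅ = pauliString '' labelsM₅ := by
  simp only [labelsM₅, Finset.coe_insert, Finset.coe_singleton, Set.image_insert_eq,
    Set.image_singleton]
  rfl

lemma M₆_eq_image : M₆ = pauliString '' labelsM₆ := by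
  simp only [labelsM₆, Finset.coe_insert, Finset.coe_singleton, Set.image_insert_eq,
    Set.image_singleton]
  rfl

/-- A 5-element subset of the two-qubit Pauli strings is pairwise anticommuting if and
only if it is one of the six sets `M₁, …, M₆`. -/
theorem stmt_2 (T : Set (Matrix (Fin 2 × Fin 2) (Fin 2 × Fin 2) ℂ))
    (hT : T ⊆ pauliStrings) (hcard : T.ncard = 5) :
    (∀ A ∈ T, ∀ B ∈ T, A ≠ B → A * B = -(B * A)) ↔
      (T = M₁ ∨ T = M₂ ∨ T = M₃ ∨ T = M₄ ∨ T = M₅ ∨ T = M₆) := by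
  classical
  set S : Finset (Fin 4 × Fin 4) := (pauliString ⁻¹' T).toFinset
  have hTS : T = pauliString '' S := by
    rw [Set.coe_toFinset, Set.image_preimage_eq_of_subset (hT.trans pauliStrings_subset_range)]
  have hS : S.card = 5 := by
    rw [← hcard, hTS, Set.ncard_image_of_injective _ pauliString_injective, Set.ncard_coe_finset]
  have himage : ∀ S' : Finset (Fin 4 × Fin 4),
      pauliString '' S = pauliString '' S' ↔ S = S' := fun S' =>
    (Set.image_injective.2 pauliString_injective).eq_iff.trans Finset.coe_inj
  change T.Pairwise _ ↔ _
  rw [M₁_eq_image, M₂_eq_image, M₃_eq_image, M₄_eq_image, M₅_eq_image, M₆_eq_image, hTS,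
    pairwise_anticomm_image_iff, pairwise_stringAnticomm_iff_of_card_eq_five hS]
  simp only [himage]

end Stmt2
end

section
/- Fix m ≥ 1 and identify ℂ^(2^m) with functions (Fin m → ZMod 2) → ℂ. For k < m let X(k) be the unitary permutation matrix sending the standard basis vector e_x to e_{x'} where x' agrees with x except x'_k = x_k + 1, and let Z(k) be the diagonal unitary with entry (−1)^{x_k} at basis vector x. Let P_m be the subgroup of the unitary group U(2^m) generated by the scalar matrix i•1 together with all X(k) and Z(k), and let C_m be the normalizer of P_m in U(2^m). Then for all C₁, C₂ ∈ C_m, the following are equivalent: (a) there exist a complex number ω with |ω| = 1 and P ∈ P_m such that C₁ = ω • (P * C₂); (b) for every Q ∈ P_m there exists α ∈ {1, −1, i, −i} such that C₁ * Q * C₁⁻¹ = α • (C₂ * Q * C₂⁻¹). -/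
namespace Stmt3

/-- Basis labels for `m` qubits: `ℂ^(2^m)` is identified with functions
`(Fin m → ZMod 2) → ℂ`. -/
abbrev QB (m : ℕ) := Fin m → ZMod 2

/-- The Pauli `X` gate on qubit `k`: the permutation matrix flipping the `k`-th bit. -/
noncomputable def Xgate {m : ℕ} (k : Fin m) : Matrix (QB m) (QB m) ℂ :=
  fun a b => if a = Function.update b k (b k + 1) then 1 else 0

/-- The Pauli `Z` gate on qubit `k`: the diagonal matrix with entry `(−1)^(x k)`. -/
noncomputable def Zgate {m : ℕ} (k : Fin m) : Matrix (QB m) (QB m) ℂ :=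
  fun a b => if a = b then (-1 : ℂ) ^ ((a k).val) else 0

/-- The `m`-qubit Pauli group: the subgroup of `U(2^m)` generated by `i•1` together with
all `X(k)` and `Z(k)`. -/
noncomputable def pauliGroup (m : ℕ) : Subgroup (Matrix.unitaryGroup (QB m) ℂ) :=
  Subgroup.closure {u |
    (u : Matrix (QB m) (QB m) ℂ) = Complex.I • 1 ∨
    ∃ k : Fin m, (u : Matrix (QB m) (QB m) ℂ) = Xgate k ∨
      (u : Matrix (QB m) (QB m) ℂ) = Zgate k}

/-- The `m`-qubit Clifford group: the normalizer of the Pauli group in `U(2^m)`. -/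
noncomputable def cliffordGroup (m : ℕ) : Subgroup (Matrix.unitaryGroup (QB m) ℂ) :=
  Subgroup.normalizer (pauliGroup m : Set (Matrix.unitaryGroup (QB m) ℂ))

/-! If `C₁ = ω P C₂`, conjugation by `C₁` is conjugation by `C₂` followed by conjugation by the
Pauli operator `P`, which only contributes a sign because any two Pauli operators commute or
anticommute.

Conversely, put `U = C₁ C₂⁻¹`. As `C₂` normalizes the Pauli group, `U` conjugates every Pauli
operator to a multiple of itself, and for the involutions `X(k)`, `Z(k)` this multiple is `±1`.
The product `P` of the `Z(k)` with `U X(k) = -X(k) U` and the `X(k)` with `U Z(k) = -Z(k) U` has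
the same signs, so `P⁻¹ U` commutes with every `X(k)` and `Z(k)`. Commuting with the diagonal
matrices `Z(k)` makes it diagonal and commuting with the bit flips `X(k)` makes that diagonal
constant: `P⁻¹ U` is a scalar of modulus one. -/

end Stmt3

section SignCommute

variable {R : Type*} [Ring R]

def AntiCommute (a b : R) : Prop := a * b = -(b * a)

def SignCommute (a b : R) : Prop := Commute a b ∨ AntiCommute a b

variable {a b c u : R}

theorem AntiCommute.symm (h : AntiCommute a b) : AntiCommute b a := by
  rw [AntiCommute, h, neg_neg]

theorem SignCommute.symm (h : SignCommute a b) : SignCommute b a :=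
  h.imp Commute.symm AntiCommute.symm

theorem AntiCommute.mul_commute_left (hac : AntiCommute a c) (hbc : Commute b c) :
    AntiCommute (a * b) c := by
  rw [AntiCommute, mul_assoc, hbc.eq, ← mul_assoc, hac, neg_mul, mul_assoc]

theorem Commute.mul_antiCommute_left (hac : Commute a c) (hbc : AntiCommute b c) :
    AntiCommute (a * b) c := by
  rw [AntiCommute, mul_assoc, hbc, mul_neg, ← mul_assoc, hac.eq, mul_assoc]

theorem AntiCommute.mul_left (hac : AntiCommute a c) (hbc : AntiCommute b c) :
    Commute (a * b) c := by
  rw [commute_iff_eq, mul_assoc, hbc, mul_neg, ← mul_assoc, hac, neg_mul, neg_neg, mul_assoc]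

theorem SignCommute.mul_left (hac : SignCommute a c) (hbc : SignCommute b c) :
    SignCommute (a * b) c := by
  rcases hac with hac | hac <;> rcases hbc with hbc | hbc
  · exact .inl (hac.mul_left hbc)
  · exact .inr (hac.mul_antiCommute_left hbc)
  · exact .inr (hac.mul_commute_left hbc)
  · exact .inl (hac.mul_left hbc)

variable [StarRing R]

theorem Commute.star_left_of_mem_unitary (hu : u ∈ unitary R) (h : Commute u b) :
    Commute (star u) b := by
  calc star u * b = star u * (b * u) * star u := by
        rw [mul_assoc, mul_assoc, Unitary.mul_star_self_of_mem hu, mul_one]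
    _ = b * star u := by rw [← h.eq, ← mul_assoc, Unitary.star_mul_self_of_mem hu, one_mul]

theorem AntiCommute.star_left_of_mem_unitary (hu : u ∈ unitary R) (h : AntiCommute u b) :
    AntiCommute (star u) b := by
  calc star u * b = star u * (b * u) * star u := by
        rw [mul_assoc, mul_assoc, Unitary.mul_star_self_of_mem hu, mul_one]
    _ = -(b * star u) := by
        rw [h.symm, mul_neg, neg_mul, ← mul_assoc, Unitary.star_mul_self_of_mem hu, one_mul]

theorem SignCommute.star_left_of_mem_unitary (hu : u ∈ unitary R) (h : SignCommute u b) :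
    SignCommute (star u) b :=
  h.imp (·.star_left_of_mem_unitary hu) (·.star_left_of_mem_unitary hu)

theorem SignCommute.mul_mul_star (hu : u ∈ unitary R) (h : SignCommute u b) :
    u * b * star u = b ∨ u * b * star u = -b := by
  rcases h with h | h
  · left; rw [h.eq, mul_assoc, Unitary.mul_star_self_of_mem hu, mul_one]
  · right; rw [h, neg_mul, mul_assoc, Unitary.mul_star_self_of_mem hu, mul_one]

def signCommutant (b : R) : Subgroup (unitary R) where
  carrier := {u | SignCommute (u : R) b}
  mul_mem' ha hb := SignCommute.mul_left ha hb
  one_mem' := .inl (Commute.one_left b)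
  inv_mem' {u} hu := SignCommute.star_left_of_mem_unitary u.2 hu

theorem signCommute_of_mem_closure {S : Set (unitary R)}
    (hS : ∀ a ∈ S, ∀ b ∈ S, SignCommute (a : R) b) {a b : unitary R}
    (ha : a ∈ Subgroup.closure S) (hb : b ∈ Subgroup.closure S) : SignCommute (a : R) b := by
  have hSb : ∀ s ∈ S, SignCommute (s : R) b := fun s hs =>
    (Subgroup.closure_le (signCommutant (s : R)) |>.mpr fun t ht => hS t ht s hs) hb |>.symm
  exact Subgroup.closure_le (signCommutant (b : R)) |>.mpr hSb ha

theorem exists_mem_closure_antiCommute_of_mem {ι : Type*} [DecidableEq ι] (g : ι → R)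
    (d : ι → unitary R) (hanti : ∀ i, AntiCommute (d i : R) (g i))
    (hcomm : ∀ i j, i ≠ j → Commute (d i : R) (g j)) (s : Finset ι) :
    ∃ P ∈ Subgroup.closure (Set.range d), ∀ j,
      (j ∈ s → AntiCommute (P : R) (g j)) ∧ (j ∉ s → Commute (P : R) (g j)) := by
  induction s using Finset.induction_on with
  | empty => exact ⟨1, one_mem _, fun j => ⟨by simp, fun _ => Commute.one_left _⟩⟩
  | insert a s ha ih =>
    obtain ⟨P, hP, hPs⟩ := ih
    refine ⟨d a * P, mul_mem (Subgroup.subset_closure ⟨a, rfl⟩) hP, fun j => ?_⟩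
    by_cases hja : j = a
    · subst hja
      exact ⟨fun _ => (hanti j).mul_commute_left ((hPs j).2 ha),
        fun h => absurd (s.mem_insert_self j) h⟩
    · have hdj := hcomm a j (Ne.symm hja)
      simp only [Finset.mem_insert, hja, false_or]
      exact ⟨fun h => hdj.mul_antiCommute_left ((hPs j).1 h),
        fun h => hdj.mul_left ((hPs j).2 h)⟩

theorem exists_mem_closure_commute_star_mul {ι : Type*} [Fintype ι] (g : ι → R)
    (d : ι → unitary R) (hanti : ∀ i, AntiCommute (d i : R) (g i))
    (hcomm : ∀ i j, i ≠ j → Commute (d i : R) (g j)) {U : R} (hU : ∀ j, SignCommute U (g j)) :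
    ∃ P ∈ Subgroup.closure (Set.range d), ∀ j, Commute (star (P : R) * U) (g j) := by
  classical
  obtain ⟨P, hP, hPs⟩ := exists_mem_closure_antiCommute_of_mem g d hanti hcomm
    (Finset.univ.filter fun j => AntiCommute U (g j))
  refine ⟨P, hP, fun j => ?_⟩
  by_cases hj : AntiCommute U (g j)
  · exact ((hPs j).1 (by simpa using hj)).star_left_of_mem_unitary P.2 |>.mul_left hj
  · exact ((hPs j).2 (by simpa using hj)).star_left_of_mem_unitary P.2 |>.mul_left
      ((hU j).resolve_right hj)

theorem signCommute_of_mul_mul_star_eq_smul {𝕜 : Type*} [Field 𝕜] [Algebra 𝕜 R] [Nontrivial R]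
    {g : R} (hu : u ∈ unitary R) (hg : g * g = 1) {α : 𝕜} (h : u * g * star u = α • g) :
    SignCommute u g := by
  have hα : α * α = 1 := by
    apply (algebraMap 𝕜 R).injective
    calc algebraMap 𝕜 R (α * α) = (α • g) * (α • g) := by
          rw [smul_mul_smul, hg, Algebra.algebraMap_eq_smul_one]
      _ = u * g * (star u * u) * g * star u := by rw [← h]; simp only [mul_assoc]
      _ = u * (g * g) * star u := by
          rw [Unitary.star_mul_self_of_mem hu, mul_one]; simp only [mul_assoc]
      _ = algebraMap 𝕜 R 1 := by
          rw [hg, mul_one, Unitary.mul_star_self_of_mem hu, map_one]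
  have hug : u * g = α • (g * u) := by
    rw [← smul_mul_assoc, ← h, mul_assoc _ (star u), Unitary.star_mul_self_of_mem hu, mul_one]
  rcases mul_self_eq_one_iff.mp hα with rfl | rfl
  · exact .inl (by simpa using hug : u * g = g * u)
  · exact .inr (by simpa using hug : u * g = -(g * u))

theorem norm_eq_one_of_smul_one_mem_unitary {𝕜 : Type*} [RCLike 𝕜] [Algebra 𝕜 R]
    [StarModule 𝕜 R] [Nontrivial R] {c : 𝕜} (h : c • (1 : R) ∈ unitary R) : ‖c‖ = 1 := by
  have hc : star c * c = 1 := by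
    have h1 := Unitary.star_mul_self_of_mem h
    rw [star_smul, star_one, smul_mul_smul, one_mul] at h1
    apply (algebraMap 𝕜 R).injective
    rw [Algebra.algebraMap_eq_smul_one, h1, map_one]
  rw [RCLike.star_def, RCLike.conj_mul] at hc
  exact (pow_eq_one_iff_of_nonneg (norm_nonneg c) two_ne_zero).mp (by exact_mod_cast hc)

theorem coe_conj_of_eq_smul_mul {𝕜 : Type*} [RCLike 𝕜] [Algebra 𝕜 R] [StarModule 𝕜 R]
    {C₁ C₂ P : unitary R} {ω : 𝕜} (hω : ‖ω‖ = 1) (hC : (C₁ : R) = ω • (P * C₂))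
    (Q : unitary R) :
    ((C₁ * Q * C₁⁻¹ : unitary R) : R) = P * ((C₂ * Q * C₂⁻¹ : unitary R) : R) * star (P : R) := by
  have hωω : ω * star ω = 1 := by rw [RCLike.star_def, RCLike.mul_conj, hω]; simp
  change (C₁ : R) * Q * star (C₁ : R) = P * (C₂ * Q * star (C₂ : R)) * star (P : R)
  rw [hC, star_smul, star_mul, smul_mul_assoc, smul_mul_assoc, mul_smul_comm, smul_smul, hωω,
    one_smul]
  simp only [mul_assoc]

end SignCommute

section Matrices

open Matrix

variable {n R : Type*} [DecidableEq n] [Fintype n] [CommRing R]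

theorem permMatrix_mul_diagonal (σ : Equiv.Perm n) (d : n → R) :
    σ.permMatrix R * diagonal d = diagonal (d ∘ σ) * σ.permMatrix R := by
  ext i j
  by_cases h : j = σ i <;> simp [h, eq_comm]

theorem apply_eq_zero_of_commute_diagonal [NoZeroDivisors R] {V : Matrix n n R} {d : n → R}
    (h : Commute V (diagonal d)) {i j : n} (hd : d i ≠ d j) : V i j = 0 := by
  have hij := congrFun (congrFun h.eq i) j
  rw [mul_diagonal, diagonal_mul] at hij
  have : (d i - d j) * V i j = 0 := by rw [sub_mul, ← hij, mul_comm, sub_self]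
  exact (mul_eq_zero.mp this).resolve_left (sub_ne_zero.mpr hd)

theorem apply_apply_of_commute_permMatrix {V : Matrix n n R} {σ : Equiv.Perm n}
    (h : Commute V (σ.permMatrix R)) (i j : n) : V (σ i) (σ j) = V i j := by
  have hij := congrFun (congrFun h.eq i) (σ j)
  rw [PEquiv.mul_toMatrix_toPEquiv, PEquiv.toMatrix_toPEquiv_mul] at hij
  simpa using hij.symm

end Matrices

theorem Function.update_add_eq_add_single {ι M : Type*} [DecidableEq ι] [AddMonoid M]
    (f : ι → M) (i : ι) (c : M) : Function.update f i (f i + c) = f + Pi.single i c := by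
  ext j; by_cases h : j = i <;> simp [h]

theorem Pi.apply_eq_apply_zero_of_add_single {ι β : Type*} [Fintype ι] [DecidableEq ι]
    {M : ι → Type*} [∀ i, AddCommMonoid (M i)] {f : (∀ i, M i) → β}
    (hf : ∀ x i c, f (x + Pi.single i c) = f x) (x : ∀ i, M i) : f x = f 0 := by
  have hs : ∀ s : Finset ι, f (∑ i ∈ s, Pi.single i (x i)) = f 0 := by
    intro s
    induction s using Finset.induction_on with
    | empty => simp
    | insert a s ha ih => rw [Finset.sum_insert ha, add_comm, hf, ih]
  simpa [Finset.univ_sum_single] using hs Finset.univ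

namespace Stmt3

section Clifford

variable {m : ℕ}

open Matrix

theorem neg_one_pow_val_add_one (a : ZMod 2) : (-1 : ℂ) ^ (a + 1).val = -(-1) ^ a.val := by
  obtain rfl | rfl : a = 0 ∨ a = 1 := by decide +revert
  all_goals simp [ZMod.val_one, show (1 : ZMod 2) + 1 = 0 from rfl]

theorem neg_one_pow_val_ne {a b : ZMod 2} (h : a ≠ b) : (-1 : ℂ) ^ a.val ≠ (-1) ^ b.val := by
  obtain rfl | rfl : a = 0 ∨ a = 1 := by decide +revert
  all_goals obtain rfl | rfl : b = 0 ∨ b = 1 := by decide +revert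
  all_goals first | exact absurd rfl h | norm_num [ZMod.val_one]

theorem single_one_add_self (k : Fin m) : (Pi.single k 1 : QB m) + Pi.single k 1 = 0 := by
  rw [← Pi.single_add, show (1 : ZMod 2) + 1 = 0 from rfl, Pi.single_zero]

theorem neg_single_one (k : Fin m) : -(Pi.single k 1 : QB m) = Pi.single k 1 := by
  rw [← Pi.single_neg]; rfl

theorem Xgate_eq_permMatrix (k : Fin m) :
    Xgate k = (Equiv.addRight (Pi.single k 1 : QB m)).permMatrix ℂ := by
  ext a b
  simp [Xgate, Function.update_add_eq_add_single, ← eq_sub_iff_add_eq, sub_eq_add_neg,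
    neg_single_one]

theorem Zgate_eq_diagonal (k : Fin m) : Zgate k = diagonal fun x => (-1 : ℂ) ^ (x k).val := rfl

theorem Xgate_mul_self (k : Fin m) : Xgate k * Xgate k = 1 := by
  rw [Xgate_eq_permMatrix, ← permMatrix_mul, ← Equiv.addRight_add, single_one_add_self,
    Equiv.addRight_zero, permMatrix_one]

theorem Xgate_commute (j k : Fin m) : Commute (Xgate j) (Xgate k) := by
  rw [commute_iff_eq, Xgate_eq_permMatrix, Xgate_eq_permMatrix, ← permMatrix_mul,
    ← permMatrix_mul, ← Equiv.addRight_add, ← Equiv.addRight_add, add_comm]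

theorem star_Xgate (k : Fin m) : star (Xgate k) = Xgate k := by
  rw [Xgate_eq_permMatrix, star_eq_conjTranspose, conjTranspose_permMatrix, Equiv.neg_addRight,
    neg_single_one]

theorem Zgate_mul_self (k : Fin m) : Zgate k * Zgate k = 1 := by
  rw [Zgate_eq_diagonal, diagonal_mul_diagonal, ← diagonal_one]
  congr 1; ext x; rw [← mul_pow, neg_one_mul, neg_neg, one_pow]

theorem Zgate_commute (j k : Fin m) : Commute (Zgate j) (Zgate k) := by
  simp only [commute_iff_eq, Zgate_eq_diagonal, diagonal_mul_diagonal, mul_comm]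

theorem star_Zgate (k : Fin m) : star (Zgate k) = Zgate k := by
  simp [Zgate_eq_diagonal, star_eq_conjTranspose]

theorem Xgate_mul_Zgate (j k : Fin m) :
    Xgate j * Zgate k =
      diagonal (fun x => (-1 : ℂ) ^ (x k + (Pi.single j 1 : QB m) k).val) * Xgate j := by
  rw [Xgate_eq_permMatrix, Zgate_eq_diagonal, permMatrix_mul_diagonal]
  rfl

theorem antiCommute_Xgate_Zgate_self (k : Fin m) : AntiCommute (Xgate k) (Zgate k) := by
  rw [AntiCommute, Xgate_mul_Zgate, ← neg_mul, Zgate_eq_diagonal, diagonal_neg]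
  simp only [Pi.single_eq_same, neg_one_pow_val_add_one]

theorem commute_Xgate_Zgate {j k : Fin m} (h : j ≠ k) : Commute (Xgate j) (Zgate k) := by
  rw [commute_iff_eq, Xgate_mul_Zgate, Zgate_eq_diagonal]
  simp only [Pi.single_eq_of_ne' h, add_zero]

theorem signCommute_Xgate_Zgate (j k : Fin m) : SignCommute (Xgate j) (Zgate k) := by
  by_cases h : j = k
  · exact .inr (h ▸ antiCommute_Xgate_Zgate_self j)
  · exact .inl (commute_Xgate_Zgate h)

theorem exists_eq_smul_one_of_commute_Xgate_Zgate {V : Matrix (QB m) (QB m) ℂ}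
    (hX : ∀ k, Commute V (Xgate k)) (hZ : ∀ k, Commute V (Zgate k)) : ∃ c : ℂ, V = c • 1 := by
  refine ⟨V 0 0, ?_⟩
  ext a b
  by_cases hab : a = b
  · subst hab
    have hf : ∀ x k c, V (x + Pi.single k c) (x + Pi.single k c) = V x x := by
      intro x k c
      obtain rfl | rfl : c = 0 ∨ c = 1 := by decide +revert
      · simp
      · exact apply_apply_of_commute_permMatrix (Xgate_eq_permMatrix k ▸ hX k) x x
    simpa using Pi.apply_eq_apply_zero_of_add_single (f := fun x => V x x) hf a
  · obtain ⟨k, hk⟩ := Function.ne_iff.mp hab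
    rw [Matrix.smul_apply, one_apply_ne hab, smul_zero]
    exact apply_eq_zero_of_commute_diagonal (Zgate_eq_diagonal k ▸ hZ k) (neg_one_pow_val_ne hk)

noncomputable def pauliX (k : Fin m) : Matrix.unitaryGroup (QB m) ℂ :=
  ⟨Xgate k, by rw [mem_unitaryGroup_iff, star_Xgate, Xgate_mul_self]⟩

noncomputable def pauliZ (k : Fin m) : Matrix.unitaryGroup (QB m) ℂ :=
  ⟨Zgate k, by rw [mem_unitaryGroup_iff, star_Zgate, Zgate_mul_self]⟩

noncomputable def pauliGen : Fin m ⊕ Fin m → Matrix.unitaryGroup (QB m) ℂ :=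
  Sum.elim pauliX pauliZ

@[simp]
theorem coe_pauliGen_inl (k : Fin m) : (pauliGen (.inl k) : Matrix (QB m) (QB m) ℂ) = Xgate k :=
  rfl

@[simp]
theorem coe_pauliGen_inr (k : Fin m) : (pauliGen (.inr k) : Matrix (QB m) (QB m) ℂ) = Zgate k :=
  rfl

theorem pauliGen_mem (i : Fin m ⊕ Fin m) : pauliGen i ∈ pauliGroup m := by
  refine Subgroup.subset_closure (Or.inr ?_)
  rcases i with k | k
  exacts [⟨k, .inl rfl⟩, ⟨k, .inr rfl⟩]

theorem pauliGen_mul_self (i : Fin m ⊕ Fin m) :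
    (pauliGen i : Matrix (QB m) (QB m) ℂ) * pauliGen i = 1 := by
  rcases i with k | k
  exacts [Xgate_mul_self k, Zgate_mul_self k]

theorem antiCommute_pauliGen_swap (i : Fin m ⊕ Fin m) :
    AntiCommute (pauliGen i.swap : Matrix (QB m) (QB m) ℂ) (pauliGen i) := by
  rcases i with k | k
  exacts [(antiCommute_Xgate_Zgate_self k).symm, antiCommute_Xgate_Zgate_self k]

theorem commute_pauliGen_swap {i j : Fin m ⊕ Fin m} (h : i ≠ j) :
    Commute (pauliGen i.swap : Matrix (QB m) (QB m) ℂ) (pauliGen j) := by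
  rcases i with k | k <;> rcases j with l | l
  · exact (commute_Xgate_Zgate (fun hlk => h (congrArg _ hlk.symm))).symm
  · exact Zgate_commute k l
  · exact Xgate_commute k l
  · exact commute_Xgate_Zgate (fun hkl => h (congrArg _ hkl))

theorem signCommute_of_mem_pauliGroup {P Q : Matrix.unitaryGroup (QB m) ℂ}
    (hP : P ∈ pauliGroup m) (hQ : Q ∈ pauliGroup m) :
    SignCommute (P : Matrix (QB m) (QB m) ℂ) Q := by
  refine signCommute_of_mem_closure ?_ hP hQ
  rintro a (ha | ⟨j, ha | ha⟩) b hb <;> rw [ha]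
  · exact .inl ((Commute.one_left _).smul_left _)
  all_goals rcases hb with hb | ⟨k, hb | hb⟩ <;> rw [hb]
  · exact .inl ((Commute.one_right _).smul_right _)
  · exact .inl (Xgate_commute j k)
  · exact signCommute_Xgate_Zgate j k
  · exact .inl ((Commute.one_right _).smul_right _)
  · exact (signCommute_Xgate_Zgate k j).symm
  · exact .inl (Zgate_commute j k)

theorem conj_eq_sign_smul_of_eq_smul_mul {C₁ C₂ : Matrix.unitaryGroup (QB m) ℂ}
    (h₂ : C₂ ∈ cliffordGroup m)
    (h : ∃ ω : ℂ, ‖ω‖ = 1 ∧ ∃ P ∈ pauliGroup m,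
      (C₁ : Matrix (QB m) (QB m) ℂ) = ω • ((P : Matrix (QB m) (QB m) ℂ) * C₂))
    {Q : Matrix.unitaryGroup (QB m) ℂ} (hQ : Q ∈ pauliGroup m) :
    ∃ α : ℂ, (α = 1 ∨ α = -1 ∨ α = Complex.I ∨ α = -Complex.I) ∧
      ((C₁ * Q * C₁⁻¹ : Matrix.unitaryGroup (QB m) ℂ) : Matrix (QB m) (QB m) ℂ) =
        α • ((C₂ * Q * C₂⁻¹ : Matrix.unitaryGroup (QB m) ℂ) : Matrix (QB m) (QB m) ℂ) := by
  obtain ⟨ω, hω, P, hP, hC⟩ := h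
  have hR : C₂ * Q * C₂⁻¹ ∈ pauliGroup m := (Subgroup.mem_normalizer_iff.mp h₂ Q).mp hQ
  rw [coe_conj_of_eq_smul_mul hω hC]
  rcases (signCommute_of_mem_pauliGroup hP hR).mul_mul_star P.2 with h | h
  · exact ⟨1, .inl rfl, by rw [h, one_smul]⟩
  · exact ⟨-1, .inr (.inl rfl), by rw [h, neg_one_smul]⟩

theorem exists_eq_smul_mul_of_conj_eq_smul {C₁ C₂ : Matrix.unitaryGroup (QB m) ℂ}
    (h₂ : C₂ ∈ cliffordGroup m)
    (h : ∀ Q ∈ pauliGroup m, ∃ α : ℂ,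
      ((C₁ * Q * C₁⁻¹ : Matrix.unitaryGroup (QB m) ℂ) : Matrix (QB m) (QB m) ℂ) =
        α • ((C₂ * Q * C₂⁻¹ : Matrix.unitaryGroup (QB m) ℂ) : Matrix (QB m) (QB m) ℂ)) :
    ∃ ω : ℂ, ‖ω‖ = 1 ∧ ∃ P ∈ pauliGroup m,
      (C₁ : Matrix (QB m) (QB m) ℂ) = ω • ((P : Matrix (QB m) (QB m) ℂ) * C₂) := by
  set U := C₁ * C₂⁻¹
  have hU : ∀ i : Fin m ⊕ Fin m, SignCommute (U : Matrix (QB m) (QB m) ℂ) (pauliGen i) := by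
    intro i
    have hQ : C₂⁻¹ * pauliGen i * C₂ ∈ pauliGroup m := by
      simpa using (Subgroup.mem_normalizer_iff.mp (inv_mem h₂) _).mp (pauliGen_mem i)
    obtain ⟨α, hα⟩ := h _ hQ
    rw [show C₁ * (C₂⁻¹ * pauliGen i * C₂) * C₁⁻¹ = U * pauliGen i * U⁻¹ by
        simp only [U]; group,
      show C₂ * (C₂⁻¹ * pauliGen i * C₂) * C₂⁻¹ = pauliGen i by group] at hα
    exact signCommute_of_mul_mul_star_eq_smul U.2 (pauliGen_mul_self i) hα
  obtain ⟨P, hP, hPU⟩ := exists_mem_closure_commute_star_mul _ _ antiCommute_pauliGen_swap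
    (fun _ _ => commute_pauliGen_swap) hU
  obtain ⟨c, hc⟩ : ∃ c : ℂ,
      ((P⁻¹ * U : Matrix.unitaryGroup (QB m) ℂ) : Matrix (QB m) (QB m) ℂ) = c • 1 :=
    exists_eq_smul_one_of_commute_Xgate_Zgate
      (fun k => by simpa using hPU (.inl k)) (fun k => by simpa using hPU (.inr k))
  refine ⟨c, norm_eq_one_of_smul_one_mem_unitary (hc ▸ (P⁻¹ * U).2), P,
    Subgroup.closure_le _ |>.mpr (Set.range_subset_iff.mpr fun i => pauliGen_mem _) hP, ?_⟩
  calc (C₁ : Matrix (QB m) (QB m) ℂ)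
      = ((P * (P⁻¹ * U) * C₂ : Matrix.unitaryGroup (QB m) ℂ) : Matrix (QB m) (QB m) ℂ) := by
        simp only [U, mul_inv_cancel_left, inv_mul_cancel_right]
    _ = P * ((P⁻¹ * U : Matrix.unitaryGroup (QB m) ℂ) : Matrix (QB m) (QB m) ℂ) * C₂ := rfl
    _ = c • (P * C₂) := by rw [hc, mul_smul_one, smul_mul_assoc]

end Clifford

theorem stmt_3_general (m : ℕ) (C₁ C₂ : Matrix.unitaryGroup (QB m) ℂ)
    (h₂ : C₂ ∈ cliffordGroup m) :
    (∃ ω : ℂ, ‖ω‖ = 1 ∧ ∃ P ∈ pauliGroup m,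
        (C₁ : Matrix (QB m) (QB m) ℂ) =
          ω • ((P : Matrix (QB m) (QB m) ℂ) * (C₂ : Matrix (QB m) (QB m) ℂ))) ↔
    (∀ Q ∈ pauliGroup m, ∃ α : ℂ,
        (α = 1 ∨ α = -1 ∨ α = Complex.I ∨ α = -Complex.I) ∧
        ((C₁ * Q * C₁⁻¹ : Matrix.unitaryGroup (QB m) ℂ) : Matrix (QB m) (QB m) ℂ) =
          α • ((C₂ * Q * C₂⁻¹ : Matrix.unitaryGroup (QB m) ℂ) : Matrix (QB m) (QB m) ℂ)) :=
  ⟨fun h _ hQ => conj_eq_sign_smul_of_eq_smul_mul h₂ h hQ,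
    fun h => exists_eq_smul_mul_of_conj_eq_smul h₂ fun Q hQ => (h Q hQ).imp fun _ => And.right⟩

/-- Two Clifford operations `C₁, C₂` agree up to a global phase and a Pauli correction
if and only if they induce the same conjugation action on every Pauli operation up to a
phase in `{1, −1, i, −i}`. -/
theorem stmt_3 (m : ℕ) (hm : 1 ≤ m) (C₁ C₂ : Matrix.unitaryGroup (QB m) ℂ)
    (h₁ : C₁ ∈ cliffordGroup m) (h₂ : C₂ ∈ cliffordGroup m) :
    (∃ ω : ℂ, ‖ω‖ = 1 ∧ ∃ P ∈ pauliGroup m,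
        (C₁ : Matrix (QB m) (QB m) ℂ) =
          ω • ((P : Matrix (QB m) (QB m) ℂ) * (C₂ : Matrix (QB m) (QB m) ℂ))) ↔
    (∀ Q ∈ pauliGroup m, ∃ α : ℂ,
        (α = 1 ∨ α = -1 ∨ α = Complex.I ∨ α = -Complex.I) ∧
        ((C₁ * Q * C₁⁻¹ : Matrix.unitaryGroup (QB m) ℂ) : Matrix (QB m) (QB m) ℂ) =
          α • ((C₂ * Q * C₂⁻¹ : Matrix.unitaryGroup (QB m) ℂ) : Matrix (QB m) (QB m) ℂ)) :=
  stmt_3_general m C₁ C₂ h₂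

end Stmt3
end

section
/- Let G be a group, H a normal subgroup of G, n ≥ 1, and g : Fin n → G. Define φ : (Fin (n−1) → H) → (Fin n → G) by φ(h) 0 = g 0 * h 0, φ(h) i = (h (i−1))⁻¹ * g i * h i for 0 < i < n−1, and φ(h) (n−1) = (h (n−2))⁻¹ * g (n−1) (when n = 1, φ(h) 0 = g 0). Then φ is injective and its image is exactly the set { g' : Fin n → G | g' 0 * g' 1 * ⋯ * g' (n−1) = g 0 * g 1 * ⋯ * g (n−1) and (g i)⁻¹ * g' i ∈ H for all i }. In particular, if G is finite, choosing h uniformly at random makes φ(h) uniformly distributed on this set. -/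
namespace Stmt4

variable {G : Type*} [Group G]

/-- The Kilian randomization map: given `g : Fin n → G` and `h : Fin (n−1) → H`, it
produces the tuple `(g 0 * h 0, (h 0)⁻¹ * g 1 * h 1, …, (h (n−2))⁻¹ * g (n−1))`. -/
def kilian {n : ℕ} (H : Subgroup G) (g : Fin n → G) (h : Fin (n - 1) → H) : Fin n → G :=
  fun i =>
    (if hi : 0 < i.val then
        ((h ⟨i.val - 1, by have := i.isLt; omega⟩ : G))⁻¹ else 1) * g i *
    (if hj : i.val < n - 1 then (h ⟨i.val, hj⟩ : G) else 1)

/-- Partial products of a tuple. -/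
private def pp {n : ℕ} (f : Fin n → G) (j : ℕ) : G := ((List.ofFn f).take j).prod

private lemma pp_zero {n : ℕ} (f : Fin n → G) : pp f 0 = 1 := rfl

private lemma pp_succ {n : ℕ} (f : Fin n → G) {j : ℕ} (hj : j < n) :
    pp f (j + 1) = pp f j * f ⟨j, hj⟩ := by
  unfold pp
  rw [List.prod_take_succ _ j (by simpa using hj)]
  simp

private lemma pp_full {n : ℕ} (f : Fin n → G) : pp f n = (List.ofFn f).prod := by
  unfold pp
  rw [List.take_of_length_le (by simp)]

/-- Kilian randomization over a normal subgroup `H ⊴ G`: the map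
`h ↦ (g 0 * h 0, (h 0)⁻¹ * g 1 * h 1, …, (h (n−2))⁻¹ * g (n−1))` is injective, and its
image consists exactly of the tuples `g'` with the same ordered product as `g` and with
`(g i)⁻¹ * g' i ∈ H` for all `i`. -/
theorem stmt_4 (n : ℕ) (hn : 1 ≤ n) (H : Subgroup G) [H.Normal] (g : Fin n → G) :
    Function.Injective (kilian H g) ∧
    Set.range (kilian H g) =
      {g' : Fin n → G |
        (List.ofFn g').prod = (List.ofFn g).prod ∧ ∀ i, (g i)⁻¹ * g' i ∈ H} := by
  constructor
  · -- injectivity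
    intro h1 h2 heq
    have key : ∀ i : Fin n, kilian H g h1 i = kilian H g h2 i := fun i => congrFun heq i
    have main : ∀ k (hk : k < n - 1), h1 ⟨k, hk⟩ = h2 ⟨k, hk⟩ := by
      intro k
      induction k with
      | zero =>
        intro hk
        have := key ⟨0, by omega⟩
        simp only [kilian] at this
        rw [dif_neg (lt_irrefl 0), dif_neg (lt_irrefl 0), dif_pos hk, dif_pos hk] at this
        simp only [one_mul] at this
        exact Subtype.coe_injective (mul_left_cancel this)
      | succ k ih =>
        intro hk
        have hk' : k < n - 1 := by omega
        have := key ⟨k + 1, by omega⟩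
        simp only [kilian] at this
        rw [dif_pos (by omega : 0 < k + 1), dif_pos (by omega : 0 < k + 1),
          dif_pos hk, dif_pos hk] at this
        simp only [Nat.add_sub_cancel] at this
        rw [ih hk'] at this
        rw [mul_assoc, mul_assoc] at this
        exact Subtype.coe_injective (mul_left_cancel (mul_left_cancel this))
    funext j
    have := main j.val j.isLt
    simpa using this
  · ext g'
    constructor
    · rintro ⟨h, rfl⟩
      constructor
      · -- products agree
        set e : ℕ → G := fun j =>
          if hj : 0 < j ∧ j < n then ((h ⟨j - 1, by omega⟩ : H) : G) else 1 with he
        have key : ∀ j, j ≤ n → pp (kilian H g h) j = pp g j * e j := by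
          intro j
          induction j with
          | zero => intro _; simp [pp_zero, he]
          | succ j ih =>
            intro hj
            have hjn : j < n := by omega
            rw [pp_succ _ hjn, pp_succ g hjn, ih (by omega)]
            have hφ : kilian H g h ⟨j, hjn⟩ = (e j)⁻¹ * g ⟨j, hjn⟩ * e (j + 1) := by
              simp only [kilian, he]
              congr 1
              · congr 1
                by_cases h0 : 0 < j
                · rw [dif_pos h0, dif_pos ⟨h0, hjn⟩]
                · rw [dif_neg h0, dif_neg (by omega)]
                  simp
              · by_cases h1 : j < n - 1
                · rw [dif_pos h1, dif_pos (by omega)]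
                  simp
                · rw [dif_neg h1, dif_neg (by omega)]
            rw [hφ]
            group
        have := key n le_rfl
        rw [pp_full, pp_full] at this
        rw [this, he]
        simp
      · -- coset condition
        intro i
        simp only [kilian]
        have hA : (if hi : 0 < i.val then
            ((h ⟨i.val - 1, by have := i.isLt; omega⟩ : G))⁻¹ else 1) ∈ H := by
          split_ifs with h0
          · exact H.inv_mem (SetLike.coe_mem _)
          · exact H.one_mem
        have hB : (if hj : i.val < n - 1 then ((h ⟨i.val, hj⟩ : H) : G) else 1) ∈ H := by
          split_ifs with h0
          · exact SetLike.coe_mem _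
          · exact H.one_mem
        have : (g i)⁻¹ * ((if hi : 0 < i.val then
            ((h ⟨i.val - 1, by have := i.isLt; omega⟩ : G))⁻¹ else 1) * g i *
            (if hj : i.val < n - 1 then ((h ⟨i.val, hj⟩ : H) : G) else 1)) =
            ((g i)⁻¹ * (if hi : 0 < i.val then
            ((h ⟨i.val - 1, by have := i.isLt; omega⟩ : G))⁻¹ else 1) * ((g i)⁻¹)⁻¹) *
            (if hj : i.val < n - 1 then ((h ⟨i.val, hj⟩ : H) : G) else 1) := by
          group
        rw [this]
        exact H.mul_mem (Subgroup.Normal.conj_mem ‹H.Normal› _ hA _) hB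
    · rintro ⟨hprod, hmem⟩
      set d : ℕ → G := fun j => (pp g j)⁻¹ * pp g' j with hd
      have hdH : ∀ j, j ≤ n → d j ∈ H := by
        intro j
        induction j with
        | zero => intro _; simp only [hd, pp_zero]; simpa using H.one_mem
        | succ j ih =>
          intro hj
          have hjn : j < n := by omega
          have : d (j + 1) = (g ⟨j, hjn⟩)⁻¹ * d j * ((g ⟨j, hjn⟩)⁻¹)⁻¹ *
              ((g ⟨j, hjn⟩)⁻¹ * g' ⟨j, hjn⟩) := by
            simp only [hd]
            rw [pp_succ g hjn, pp_succ g' hjn]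
            group
          rw [this]
          exact H.mul_mem (Subgroup.Normal.conj_mem ‹H.Normal› _ (ih (by omega)) _) (hmem _)
      have hdn : d n = 1 := by
        simp only [hd]
        rw [pp_full, pp_full, hprod]
        group
      refine ⟨fun j => ⟨d (j.val + 1), hdH _ (by have := j.isLt; omega)⟩, ?_⟩
      funext i
      have hval : kilian H g (fun j => ⟨d (j.val + 1), hdH _ (by have := j.isLt; omega)⟩) i =
          (d i.val)⁻¹ * g i * d (i.val + 1) := by
        simp only [kilian]
        congr 1
        · congr 1
          by_cases h0 : 0 < i.val
          · rw [dif_pos h0]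
            congr 2
            omega
          · rw [dif_neg h0]
            have : i.val = 0 := by omega
            rw [this, hd]
            simp [pp_zero]
        · by_cases h1 : i.val < n - 1
          · rw [dif_pos h1]
          · rw [dif_neg h1]
            have : i.val + 1 = n := by have := i.isLt; omega
            rw [this, hdn]
      rw [hval]
      simp only [hd]
      rw [pp_succ g i.isLt, pp_succ g' i.isLt]
      simp only [Fin.eta]
      group

end Stmt4
end

section
/- Fix m ≥ 1 and row vectors x, z : Fin m → ZMod 2 with x ≠ 0. Let Ω be the set of pairs (A, S) of m×m matrices over ZMod 2 with A invertible and S symmetric (Sᵀ = S). Define Φ : Ω → (Fin m → ZMod 2) × (Fin m → ZMod 2) by Φ(A, S) := (x ·ᵥ A, x ·ᵥ (S * (A⁻¹)ᵀ) + z ·ᵥ (A⁻¹)ᵀ), where v ·ᵥ M denotes the row-vector–matrix product (Matrix.vecMul). Then the image of Φ is exactly { (u, v) | u ≠ 0 }, and all fibers of Φ over this set have the same cardinality, namely |Ω| / ((2^m − 1) · 2^m). Equivalently, for (A, S) uniformly random in Ω, Φ(A, S) is uniformly distributed on ((Fin m → ZMod 2) \ {0}) × (Fin m → ZMod 2). 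-/
open Matrix
open scoped Classical

/-!
In terms of `Φ (A, S) = (x ᵥ* A, (x ᵥ* S + z) ᵥ* A⁻ᵀ)`, the fiber over `(u, v)` consists of
the pairs with `x ᵥ* A = u` and `x ᵥ* S = v ᵥ* Aᵀ - z`. Given an invertible `M` with
`u ᵥ* M = u'`, the map `(A, S) ↦ (A * M, S + T)`, where `T` is a symmetric matrix with prescribed
`x ᵥ* T` (it exists since `x ≠ 0`), injects the fiber over `(u, v)` into the fiber over
`(u', v')`. Since `GL` acts transitively on nonzero vectors, all fibers over `u ≠ 0` have the
same size, and counting `Ω` fiberwise gives the value.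
-/

open Finset

theorem card_filter_fst_ne_zero {V W : Type*} [Fintype V] [Fintype W] [Zero V]
    [DecidableEq V] :
    #(univ.filter fun q : V × W => q.1 ≠ 0) = (Fintype.card V - 1) * Fintype.card W := by
  have : (univ.filter fun q : V × W => q.1 ≠ 0) = univ.erase 0 ×ˢ univ := by
    ext; simp
  rw [this, card_product, card_erase_of_mem (mem_univ 0), card_univ, card_univ]

variable {K n : Type*} [Field K] [Fintype n] [DecidableEq n]

theorem exists_isUnit_vecMul_eq {u u' : n → K} (hu : u ≠ 0) (hu' : u' ≠ 0) :
    ∃ M : Matrix n n K, IsUnit M ∧ u ᵥ* M = u' := by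
  obtain ⟨g, hg⟩ := Submodule.exists_linearEquiv_restrict_eq
    ((LinearEquiv.toSpanNonzeroSingleton K _ u hu).symm ≪≫ₗ
      LinearEquiv.toSpanNonzeroSingleton K _ u' hu')
  have hgu : g u = u' := by
    have := (hg ⟨u, Submodule.mem_span_singleton_self u⟩).symm
    rwa [LinearEquiv.trans_apply, LinearEquiv.coord_self,
      LinearEquiv.toSpanNonzeroSingleton_one] at this
  have hmulVec : (LinearMap.toMatrix' g.toLinearMap).mulVec = g :=
    funext (LinearMap.toMatrix'_mulVec _)
  refine ⟨(LinearMap.toMatrix' g.toLinearMap)ᵀ, ?_, ?_⟩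
  · rw [isUnit_transpose, ← mulVec_injective_iff_isUnit, hmulVec]
    exact g.injective
  · rw [vecMul_transpose, hmulVec, hgu]

theorem exists_transpose_eq_vecMul_eq {x : n → K} (hx : x ≠ 0) (w : n → K) :
    ∃ T : Matrix n n K, Tᵀ = T ∧ x ᵥ* T = w := by
  obtain ⟨i, hi⟩ := Function.ne_iff.mp hx
  set e : n → K := Pi.single i (x i)⁻¹
  have he : x ⬝ᵥ e = 1 := by simpa [e, dotProduct_single] using mul_inv_cancel₀ hi
  refine ⟨vecMulVec e w + vecMulVec w e - (x ⬝ᵥ w) • vecMulVec e e, ?_, ?_⟩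
  · simp only [transpose_sub, transpose_add, transpose_smul, transpose_vecMulVec, add_comm]
  · simp only [vecMul_sub, vecMul_add, vecMul_smul, vecMul_vecMulVec, he, one_smul,
      add_sub_cancel_right]

noncomputable section

def cliffordImage (x z : n → K) (p : Matrix n n K × Matrix n n K) : (n → K) × (n → K) :=
  (x ᵥ* p.1, x ᵥ* (p.2 * (p.1⁻¹)ᵀ) + z ᵥ* (p.1⁻¹)ᵀ)

theorem cliffordImage_eq_iff {x z u v : n → K} {p : Matrix n n K × Matrix n n K}
    (hA : IsUnit p.1) :
    cliffordImage x z p = (u, v) ↔ x ᵥ* p.1 = u ∧ x ᵥ* p.2 = v ᵥ* p.1ᵀ - z := by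
  have hdet : IsUnit p.1ᵀ.det := by rwa [det_transpose, ← isUnit_iff_isUnit_det]
  have hsnd : x ᵥ* (p.2 * (p.1⁻¹)ᵀ) + z ᵥ* (p.1⁻¹)ᵀ = (x ᵥ* p.2 + z) ᵥ* (p.1⁻¹)ᵀ := by
    rw [add_vecMul, vecMul_vecMul]
  have hsolve (w : n → K) : w ᵥ* (p.1⁻¹)ᵀ = v ↔ w = v ᵥ* p.1ᵀ := by
    rw [transpose_nonsing_inv]
    constructor
    · rintro rfl
      rw [vecMul_vecMul, nonsing_inv_mul _ hdet, vecMul_one]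
    · rintro rfl
      rw [vecMul_vecMul, mul_nonsing_inv _ hdet, vecMul_one]
  rw [cliffordImage, Prod.mk.injEq, hsnd, hsolve, eq_sub_iff_add_eq]

variable (K n) [Fintype K] [DecidableEq K]

def cliffordTableaux : Finset (Matrix n n K × Matrix n n K) :=
  univ.filter fun p => IsUnit p.1 ∧ p.2ᵀ = p.2

variable {K n}

theorem card_fiber_cliffordImage_le {x u u' : n → K} (z : n → K) (hx : x ≠ 0)
    {M : Matrix n n K} (hM : IsUnit M) (huM : u ᵥ* M = u') (v v' : n → K) :
    #{p ∈ cliffordTableaux K n | cliffordImage x z p = (u, v)} ≤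
      #{p ∈ cliffordTableaux K n | cliffordImage x z p = (u', v')} := by
  choose T hT hxT using exists_transpose_eq_vecMul_eq hx
  let shift (A : Matrix n n K) : Matrix n n K := T (v' ᵥ* (A * M)ᵀ - v ᵥ* Aᵀ)
  refine card_le_card_of_injOn (fun p => (p.1 * M, p.2 + shift p.1)) ?_ ?_
  · intro p hp
    simp only [coe_filter, cliffordTableaux, mem_filter, mem_univ, true_and,
      Set.mem_ofPred_eq] at hp ⊢
    obtain ⟨⟨hA, hS⟩, hΦ⟩ := hp
    rw [cliffordImage_eq_iff hA] at hΦ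
    refine ⟨⟨hA.mul hM, by rw [transpose_add, hS, hT]⟩, (cliffordImage_eq_iff (hA.mul hM)).2
      ⟨by rw [← vecMul_vecMul, hΦ.1, huM], ?_⟩⟩
    rw [vecMul_add, hΦ.2, hxT]
    abel
  · intro p _ q _ hpq
    have hfst : p.1 = q.1 := hM.mul_left_injective (congrArg Prod.fst hpq)
    have hsnd : p.2 + shift p.1 = q.2 + shift q.1 := congrArg Prod.snd hpq
    rw [hfst] at hsnd
    exact Prod.ext hfst (add_right_cancel hsnd)

theorem card_fiber_cliffordImage_eq {x u u' : n → K} (z : n → K) (hx : x ≠ 0) (hu : u ≠ 0)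
    (hu' : u' ≠ 0) (v v' : n → K) :
    #{p ∈ cliffordTableaux K n | cliffordImage x z p = (u, v)} =
      #{p ∈ cliffordTableaux K n | cliffordImage x z p = (u', v')} := by
  obtain ⟨M, hM, huM⟩ := exists_isUnit_vecMul_eq hu hu'
  obtain ⟨M', hM', hu'M'⟩ := exists_isUnit_vecMul_eq hu' hu
  exact (card_fiber_cliffordImage_le z hx hM huM v v').antisymm
    (card_fiber_cliffordImage_le z hx hM' hu'M' v' v)

theorem image_cliffordImage {x : n → K} (z : n → K) (hx : x ≠ 0) :
    (cliffordTableaux K n).image (cliffordImage x z) = univ.filter fun q => q.1 ≠ 0 := by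
  ext ⟨u, v⟩
  simp only [cliffordTableaux, mem_image, mem_filter, mem_univ, true_and]
  constructor
  · rintro ⟨p, ⟨hA, -⟩, hΦ⟩
    rw [← ((cliffordImage_eq_iff hA).1 hΦ).1, ← zero_vecMul p.1]
    exact (vecMul_injective_of_isUnit hA).ne hx
  · intro hu
    obtain ⟨M, hM, hxM⟩ := exists_isUnit_vecMul_eq hx hu
    obtain ⟨T, hT, hxT⟩ := exists_transpose_eq_vecMul_eq hx (v ᵥ* Mᵀ - z)
    exact ⟨(M, T), ⟨hM, hT⟩, (cliffordImage_eq_iff hM).2 ⟨hxM, hxT⟩⟩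

theorem card_cliffordTableaux {x u : n → K} (z : n → K) (hx : x ≠ 0) (hu : u ≠ 0)
    (v : n → K) :
    #(cliffordTableaux K n) =
      (Fintype.card K ^ Fintype.card n - 1) * Fintype.card K ^ Fintype.card n *
        #{p ∈ cliffordTableaux K n | cliffordImage x z p = (u, v)} := by
  have hmaps : Set.MapsTo (cliffordImage x z) (cliffordTableaux K n)
      (univ.filter fun q : (n → K) × (n → K) => q.1 ≠ 0) :=
    fun p hp => image_cliffordImage z hx ▸ mem_image_of_mem _ hp
  have hfibers (q) (hq : q ∈ univ.filter fun q : (n → K) × (n → K) => q.1 ≠ 0) :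
      #{p ∈ cliffordTableaux K n | cliffordImage x z p = q} =
        #{p ∈ cliffordTableaux K n | cliffordImage x z p = (u, v)} :=
    card_fiber_cliffordImage_eq z hx (mem_filter.1 hq).2 hu q.2 v
  rw [card_eq_sum_card_fiberwise hmaps, sum_const_nat hfibers, card_filter_fst_ne_zero,
    Fintype.card_fun]

theorem card_fiber_cliffordImage {x u : n → K} (z : n → K) (hx : x ≠ 0) (hu : u ≠ 0)
    (v : n → K) :
    #{p ∈ cliffordTableaux K n | cliffordImage x z p = (u, v)} =
      #(cliffordTableaux K n) /
        ((Fintype.card K ^ Fintype.card n - 1) * Fintype.card K ^ Fintype.card n) := by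
  have hpos : 0 < (Fintype.card K ^ Fintype.card n - 1) * Fintype.card K ^ Fintype.card n := by
    rw [← Fintype.card_fun, ← card_filter_fst_ne_zero (W := n → K)]
    exact card_pos.2 ⟨(x, z), by simpa using hx⟩
  rw [card_cliffordTableaux z hx hu v, Nat.mul_div_cancel_left _ hpos]

end

theorem stmt_7_general (m : ℕ) (x z : Fin m → ZMod 2) (hx : x ≠ 0) :
    letI Ω : Finset (Matrix (Fin m) (Fin m) (ZMod 2) × Matrix (Fin m) (Fin m) (ZMod 2)) :=
      Finset.univ.filter fun p => IsUnit p.1 ∧ p.2ᵀ = p.2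
    letI Φ : Matrix (Fin m) (Fin m) (ZMod 2) × Matrix (Fin m) (Fin m) (ZMod 2) →
        (Fin m → ZMod 2) × (Fin m → ZMod 2) :=
      fun p => (x ᵥ* p.1, x ᵥ* (p.2 * (p.1⁻¹)ᵀ) + z ᵥ* (p.1⁻¹)ᵀ)
    Ω.image Φ
        = Finset.univ.filter (fun q : (Fin m → ZMod 2) × (Fin m → ZMod 2) => q.1 ≠ 0) ∧
      ∀ u v : Fin m → ZMod 2, u ≠ 0 →
        (Ω.filter fun p => Φ p = (u, v)).card = Ω.card / ((2 ^ m - 1) * 2 ^ m) := by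
  refine ⟨image_cliffordImage z hx, fun u v hu => ?_⟩
  have hcard := card_fiber_cliffordImage z hx hu v
  rw [ZMod.card, Fintype.card_fin] at hcard
  exact hcard

/-- For fixed row vectors `x ≠ 0` and `z` over `𝔽₂`, the map
`(A, S) ↦ (x ·ᵥ A, x ·ᵥ (S * (A⁻¹)ᵀ) + z ·ᵥ (A⁻¹)ᵀ)`, defined on the set `Ω` of pairs of
an invertible matrix `A` and a symmetric matrix `S`, has image exactly the pairs `(u, v)`
with `u ≠ 0`, and all its fibers over this image have the same cardinality
`|Ω| / ((2^m − 1) · 2^m)`. -/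
theorem stmt_7 (m : ℕ) (hm : 1 ≤ m) (x z : Fin m → ZMod 2) (hx : x ≠ 0) :
    letI Ω : Finset (Matrix (Fin m) (Fin m) (ZMod 2) × Matrix (Fin m) (Fin m) (ZMod 2)) :=
      Finset.univ.filter fun p => IsUnit p.1 ∧ p.2ᵀ = p.2
    letI Φ : Matrix (Fin m) (Fin m) (ZMod 2) × Matrix (Fin m) (Fin m) (ZMod 2) →
        (Fin m → ZMod 2) × (Fin m → ZMod 2) :=
      fun p => (x ᵥ* p.1, x ᵥ* (p.2 * (p.1⁻¹)ᵀ) + z ᵥ* (p.1⁻¹)ᵀ)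
    Ω.image Φ
        = Finset.univ.filter (fun q : (Fin m → ZMod 2) × (Fin m → ZMod 2) => q.1 ≠ 0) ∧
      ∀ u v : Fin m → ZMod 2, u ≠ 0 →
        (Ω.filter fun p => Φ p = (u, v)).card = Ω.card / ((2 ^ m - 1) * 2 ^ m) :=
  stmt_7_general m x z hx
end

section
/- Fix m ≥ 1 and a row vector x : Fin m → ZMod 2 with x ≠ 0. The map S ↦ x ·ᵥ S (row-vector–matrix product Matrix.vecMul), defined on the set of symmetric m×m matrices over ZMod 2 (Sᵀ = S), is surjective onto Fin m → ZMod 2, and all its fibers have the same cardinality 2^{m(m+1)/2} / 2^m. Equivalently, if S is a uniformly random symmetric matrix over ZMod 2 and x ≠ 0, then x ·ᵥ S is uniformly distributed on Fin m → ZMod 2. -/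
/-!
For `x ≠ 0` pick `u` with `x ⬝ᵥ u = 1`; then `u vᵀ + v uᵀ - (x ⬝ᵥ v) u uᵀ` is a symmetric matrix
sent to `v` by `S ↦ x ᵥ* S`. This map is additive on the group of symmetric matrices, so, being
onto, all its fibres are cosets of its kernel and have `|symmetric matrices| / |𝔽₂ᵐ|` elements.
A symmetric matrix is a function on unordered pairs of indices, of which there are `m(m+1)/2`.
-/

open Matrix Finset

namespace AddMonoidHom

theorem card_fiber_mul_card_of_surjective {G H : Type*} [AddGroup G] [Finite G] [AddGroup H]
    {f : G →+ H} (hf : Function.Surjective f) (y : H) :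
    Nat.card {g // f g = y} * Nat.card H = Nat.card G := by
  have : Finite H := Finite.of_surjective f hf
  cases nonempty_fintype G
  cases nonempty_fintype H
  classical
  simp only [Nat.card_eq_fintype_card, Fintype.card_subtype]
  calc #{g | f g = y} * Fintype.card H
      = ∑ y' : H, #{g | f g = y'} := by
        rw [sum_congr rfl fun y' _ => card_fiber_eq_of_mem_range f (hf y') (hf y), sum_const,
          card_univ, smul_eq_mul, mul_comm]
    _ = Fintype.card G := (card_eq_sum_card_fiberwise fun g _ => mem_univ (f g)).symm

end AddMonoidHom

namespace Matrix

variable {n R : Type*}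

variable (n R) in
def symmetricAddSubgroup [AddGroup R] : AddSubgroup (Matrix n n R) where
  carrier := {A | A.IsSymm}
  add_mem' := IsSymm.add
  zero_mem' := isSymm_zero
  neg_mem' := IsSymm.neg

def isSymmEquivSym2 : {A : Matrix n n R // A.IsSymm} ≃ (Sym2 n → R) where
  toFun A := Sym2.lift ⟨fun i j => A.1 i j, fun i j => (A.2.apply i j).symm⟩
  invFun f := ⟨of fun i j => f s(i, j), IsSymm.ext fun i j => by simp [Sym2.eq_swap]⟩
  left_inv A := by ext; simp
  right_inv f := by ext z; induction z using Sym2.ind; simp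

theorem card_isSymm [Finite n] :
    Nat.card {A : Matrix n n R // A.IsSymm} =
      Nat.card R ^ (Nat.card n * (Nat.card n + 1) / 2) := by
  rw [Nat.card_congr isSymmEquivSym2, Nat.card_fun, Sym2.natCard, Nat.choose_two_right,
    Nat.add_sub_cancel, Nat.mul_comm]

theorem exists_isSymm_vecMul_eq_of_dotProduct_eq_one [Fintype n] [CommRing R] {x u : n → R}
    (hxu : x ⬝ᵥ u = 1) (v : n → R) : ∃ S : Matrix n n R, S.IsSymm ∧ x ᵥ* S = v := by
  refine ⟨vecMulVec u v + vecMulVec v u - (x ⬝ᵥ v) • vecMulVec u u, ?_, ?_⟩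
  · rw [← transpose_vecMulVec u v]
    exact (isSymm_add_transpose_self _).sub (IsSymm.smul (transpose_vecMulVec u u) (x ⬝ᵥ v))
  · simp only [vecMul_sub, vecMul_add, vecMul_smul, vecMul_vecMulVec, hxu, one_smul]
    abel

theorem exists_isSymm_vecMul_eq [Fintype n] [Field R] {x : n → R} (hx : x ≠ 0)
    (v : n → R) : ∃ S : Matrix n n R, S.IsSymm ∧ x ᵥ* S = v := by
  classical
  obtain ⟨i, hi⟩ := Function.ne_iff.mp hx
  exact exists_isSymm_vecMul_eq_of_dotProduct_eq_one
    (by rw [dotProduct_single, mul_inv_cancel₀ hi] : x ⬝ᵥ Pi.single i (x i)⁻¹ = 1) v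

theorem card_isSymm_vecMul_eq_mul_card_pow [Fintype n] [Field R] [Finite R] {x : n → R}
    (hx : x ≠ 0) (v : n → R) :
    Nat.card {S : Matrix n n R // S.IsSymm ∧ x ᵥ* S = v} * Nat.card R ^ Nat.card n =
      Nat.card R ^ (Nat.card n * (Nat.card n + 1) / 2) := by
  let f : symmetricAddSubgroup n R →+ (n → R) :=
    AddMonoidHom.mk' (fun S => x ᵥ* (S : Matrix n n R)) fun S T => vecMul_add _ _ _
  have hf : Function.Surjective f := fun v =>
    let ⟨S, hS, hSv⟩ := exists_isSymm_vecMul_eq hx v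
    ⟨⟨S, hS⟩, hSv⟩
  have e : {S // f S = v} ≃ {S : Matrix n n R // S.IsSymm ∧ x ᵥ* S = v} :=
    Equiv.subtypeSubtypeEquivSubtypeInter (· ∈ symmetricAddSubgroup n R) (x ᵥ* · = v)
  rw [← Nat.card_congr e, ← Nat.card_fun, AddMonoidHom.card_fiber_mul_card_of_surjective hf v]
  exact card_isSymm

end Matrix

open scoped Classical

theorem stmt_9_general (m : ℕ) (x : Fin m → ZMod 2) (hx : x ≠ 0) :
    (∀ v : Fin m → ZMod 2, ∃ S : Matrix (Fin m) (Fin m) (ZMod 2), Sᵀ = S ∧ x ᵥ* S = v) ∧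
      (∀ v : Fin m → ZMod 2,
        (Finset.univ.filter
            fun S : Matrix (Fin m) (Fin m) (ZMod 2) => Sᵀ = S ∧ x ᵥ* S = v).card
          = 2 ^ (m * (m + 1) / 2) / 2 ^ m) := by
  refine ⟨exists_isSymm_vecMul_eq hx, fun v => ?_⟩
  have h := card_isSymm_vecMul_eq_mul_card_pow hx v
  rw [Nat.card_zmod, Nat.card_fin] at h
  rw [← Fintype.card_subtype, ← Nat.card_eq_fintype_card]
  exact (Nat.div_eq_of_eq_mul_left (by positivity) h.symm).symm

/-- For a fixed nonzero row vector `x` over `𝔽₂`, the map `S ↦ x ·ᵥ S`, defined on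
symmetric `m×m` matrices over `𝔽₂`, is surjective onto all row vectors and all its
fibers have the same cardinality `2^(m(m+1)/2) / 2^m`; equivalently, a uniformly random
symmetric matrix maps `x` to a uniformly random vector. -/
theorem stmt_9 (m : ℕ) (hm : 1 ≤ m) (x : Fin m → ZMod 2) (hx : x ≠ 0) :
    (∀ v : Fin m → ZMod 2, ∃ S : Matrix (Fin m) (Fin m) (ZMod 2), Sᵀ = S ∧ x ᵥ* S = v) ∧
      (∀ v : Fin m → ZMod 2,
        (Finset.univ.filter
            fun S : Matrix (Fin m) (Fin m) (ZMod 2) => Sᵀ = S ∧ x ᵥ* S = v).card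
          = 2 ^ (m * (m + 1) / 2) / 2 ^ m) :=
  stmt_9_general m x hx
end

section
/- Let 𝒫 be the set of 15 two-qubit Pauli strings (Kronecker products P ⊗ Q with P, Q ∈ {1, X, Y, Z}, excluding 1 ⊗ 1), and call a 3-element subset {P, Q, R} ⊆ 𝒫 with pairwise commuting elements and P * Q * R = ε • 1, ε ∈ {1, −1}, a Pauli line with sign ε. Say an assignment ν : 𝒫 → ({1, −1} : Set ℤ) violates a line {P, Q, R} of sign ε if ν(P) * ν(Q) * ν(R) ≠ ε. Then every assignment ν violates at least 3 of the 15 Pauli lines; moreover the constant assignment ν ≡ 1 violates exactly 3 of them (namely {X⊗X, Y⊗Y, Z⊗Z}, {X⊗Y, Y⊗Z, Z⊗X}, {X⊗Z, Y⊗X, Z⊗Y}). -/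
open Kronecker

namespace Stmt14

/-- The Pauli matrix `X`. -/
noncomputable def σx : Matrix (Fin 2) (Fin 2) ℂ := !![0, 1; 1, 0]

/-- The Pauli matrix `Y`. -/
noncomputable def σy : Matrix (Fin 2) (Fin 2) ℂ := !![0, -Complex.I; Complex.I, 0]

/-- The Pauli matrix `Z`. -/
noncomputable def σz : Matrix (Fin 2) (Fin 2) ℂ := !![1, 0; 0, -1]

/-- The set `{1, X, Y, Z}` of one-qubit Pauli matrices. -/
noncomputable def pauli1 : Set (Matrix (Fin 2) (Fin 2) ℂ) := {1, σx, σy, σz}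

/-- The set `𝒫` of the 15 two-qubit Pauli strings: Kronecker products `P ⊗ Q` with
`P, Q ∈ {1, X, Y, Z}`, excluding `1 ⊗ 1`. -/
noncomputable def pauliStrings : Set (Matrix (Fin 2 × Fin 2) (Fin 2 × Fin 2) ℂ) :=
  {A | (∃ P ∈ pauli1, ∃ Q ∈ pauli1, A = P ⊗ₖ Q) ∧
    A ≠ (1 : Matrix (Fin 2) (Fin 2) ℂ) ⊗ₖ (1 : Matrix (Fin 2) (Fin 2) ℂ)}

/-- A Pauli line: a 3-element subset `{P, Q, R}` of `𝒫` whose elements pairwise commute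
and with `P * Q * R = ε • 1` for some sign `ε ∈ {1, −1}`. -/
def IsPauliLine (L : Set (Matrix (Fin 2 × Fin 2) (Fin 2 × Fin 2) ℂ)) : Prop :=
  ∃ P Q R : Matrix (Fin 2 × Fin 2) (Fin 2 × Fin 2) ℂ,
    P ∈ pauliStrings ∧ Q ∈ pauliStrings ∧ R ∈ pauliStrings ∧
    P ≠ Q ∧ P ≠ R ∧ Q ≠ R ∧ L = {P, Q, R} ∧
    P * Q = Q * P ∧ P * R = R * P ∧ Q * R = R * Q ∧
    ∃ ε : ℂ, (ε = 1 ∨ ε = -1) ∧ P * Q * R = ε • (1 : Matrix (Fin 2 × Fin 2) (Fin 2 × Fin 2) ℂ)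

/-- An assignment `ν` of `±1` outcomes violates the line `{P, Q, R}` of sign `ε` if
`ν P * ν Q * ν R ≠ ε`. -/
def Violates (ν : Matrix (Fin 2 × Fin 2) (Fin 2 × Fin 2) ℂ → ℤ)
    (L : Set (Matrix (Fin 2 × Fin 2) (Fin 2 × Fin 2) ℂ)) : Prop :=
  ∃ P Q R : Matrix (Fin 2 × Fin 2) (Fin 2 × Fin 2) ℂ, ∃ ε : ℤ,
    L = {P, Q, R} ∧ P ≠ Q ∧ P ≠ R ∧ Q ≠ R ∧
    P * Q * R = (ε : ℂ) • (1 : Matrix (Fin 2 × Fin 2) (Fin 2 × Fin 2) ℂ) ∧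
    ν P * ν Q * ν R ≠ ε

/-!
Every Pauli line is `{P_u, P_v, P_u P_v}` (up to a phase) for two distinct commuting Pauli
strings, and its sign is the phase of `P_u P_v`; so `ν` violates a line exactly when the
product of its three values differs from that sign. The 15 lines contain 10 Mermin–Peres
squares: 6 lines with every point on 0 or 2 of them, whose signs multiply to `-1`. Multiplying
the six constraints of a square shows that every `±1` assignment violates one of its lines.
Each line lies in only 4 of the 10 squares, so at least `⌈10 / 4⌉ = 3` lines are violated.
The constant assignment violates exactly the lines of sign `-1`, of which there are three.
-/

open Finset Matrix Complex

theorem I_pow_of_even {n : ℕ} (hn : Even n) : I ^ n = ((-1 : ℤ) ^ (n / 2) : ℤ) := by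
  obtain ⟨k, rfl⟩ := hn
  rw [← two_mul, pow_mul, I_sq, Nat.mul_div_cancel_left k two_pos]
  push_cast
  rfl

theorem even_of_I_pow_eq_intCast {n : ℕ} {m : ℤ} (h : I ^ n = m) : Even n := by
  by_contra hn
  obtain ⟨k, rfl⟩ := Nat.not_even_iff_odd.mp hn
  rw [pow_succ, pow_mul, I_sq] at h
  have him := congrArg Complex.im h
  rcases neg_one_pow_eq_or ℂ k with hk | hk <;> simp [hk] at him

theorem exists_prod_ne_of_even_card {ι M : Type*} [DecidableEq ι] [CommMonoid M]
    (g : Finset (Finset ι × M)) (ν : ι → M) (hν : ∀ p ∈ g, ∀ i ∈ p.1, ν i ^ 2 = 1)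
    (heven : ∀ i, Even #{p ∈ g | i ∈ p.1}) (hsign : ∏ p ∈ g, p.2 ≠ 1) :
    ∃ p ∈ g, ∏ i ∈ p.1, ν i ≠ p.2 := by
  by_contra! h
  refine hsign ?_
  calc ∏ p ∈ g, p.2
      = ∏ p ∈ g, ∏ i ∈ p.1, ν i := (prod_congr rfl h).symm
    _ = ∏ i ∈ g.biUnion Prod.fst, ∏ p ∈ g with i ∈ p.1, ν i :=
        prod_comm' fun p i => by simp only [mem_filter, mem_biUnion]; grind
    _ = 1 := prod_eq_one fun i hi => by
        obtain ⟨k, hk⟩ := heven i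
        obtain ⟨p, hp, hip⟩ := mem_biUnion.mp hi
        rw [prod_const, hk, ← two_mul, pow_mul, hν p hp i hip, one_pow]

noncomputable def pauli : Fin 4 → Matrix (Fin 2) (Fin 2) ℂ := ![1, σx, σy, σz]

/-- `pauli a * pauli b = I ^ qubitPhase a b • pauli (a ^^^ b)`; e.g. `X * Y = I • Z`. -/
def qubitPhase : Fin 4 → Fin 4 → ℕ :=
  ![![0, 0, 0, 0], ![0, 0, 1, 3], ![0, 3, 0, 1], ![0, 1, 3, 0]]

theorem pauli_mul_pauli (a b : Fin 4) :
    pauli a * pauli b = I ^ qubitPhase a b • pauli (a ^^^ b) := by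
  fin_cases a <;> fin_cases b <;>
    simp [pauli, qubitPhase, σx, σy, σz, one_fin_two, smul_of, pow_succ]

theorem trace_pauli (a : Fin 4) : (pauli a).trace = if a = 0 then 2 else 0 := by
  fin_cases a <;> norm_num [pauli, σx, σy, σz, trace_fin_two, one_fin_two]

abbrev Label := Fin 4 × Fin 4

instance : XorOp Label := ⟨fun u v => (u.1 ^^^ v.1, u.2 ^^^ v.2)⟩

def phase (u v : Label) : ℕ := qubitPhase u.1 v.1 + qubitPhase u.2 v.2

namespace Label

theorem xor_eq_zero_iff {u v : Label} : u ^^^ v = 0 ↔ u = v := by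
  revert u v; decide

theorem xor_ne_zero {u v : Label} (h : u ≠ v) : u ^^^ v ≠ 0 := mt xor_eq_zero_iff.mp h

theorem xor_ne_left {u v : Label} (hv : v ≠ 0) : u ^^^ v ≠ u := by
  revert u v; decide

theorem xor_ne_right {u v : Label} (hu : u ≠ 0) : u ^^^ v ≠ v := by
  revert u v; decide

theorem phase_self (u : Label) : phase u u = 0 := by
  revert u; decide

theorem xor_comm (u v : Label) : u ^^^ v = v ^^^ u := by
  revert u v; decide

theorem phase_swap_mod_four_of_even {u v : Label} (h : Even (phase u v)) :
    phase v u % 4 = phase u v % 4 := by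
  revert h; revert u v; decide

theorem prod_insert_insert_xor {M : Type*} [CommMonoid M] (f : Label → M) {u v : Label}
    (hu : u ≠ 0) (hv : v ≠ 0) (huv : u ≠ v) :
    ∏ w ∈ {u, v, u ^^^ v}, f w = f u * f v * f (u ^^^ v) := by
  rw [prod_insert (by simp [huv, (xor_ne_left hv).symm]), prod_pair (xor_ne_right hu).symm,
    mul_assoc]

end Label

noncomputable def pauliString (u : Label) : Matrix (Fin 2 × Fin 2) (Fin 2 × Fin 2) ℂ :=
  pauli u.1 ⊗ₖ pauli u.2

theorem pauliString_mul (u v : Label) :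
    pauliString u * pauliString v = I ^ phase u v • pauliString (u ^^^ v) := by
  rw [pauliString, pauliString, ← mul_kronecker_mul, pauli_mul_pauli, pauli_mul_pauli,
    smul_kronecker, kronecker_smul, smul_smul, ← pow_add, phase]
  rfl

theorem pauliString_zero : pauliString 0 = 1 := one_kronecker_one

theorem pauliString_mul_self (u : Label) : pauliString u * pauliString u = 1 := by
  rw [pauliString_mul, Label.xor_eq_zero_iff.mpr rfl, Label.phase_self, pow_zero, one_smul,
    pauliString_zero]

theorem pauliString_xor (u v : Label) :
    pauliString (u ^^^ v) = (I ^ phase u v)⁻¹ • (pauliString u * pauliString v) := by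
  rw [pauliString_mul, inv_smul_smul₀ (pow_ne_zero _ I_ne_zero)]

theorem pauliString_mul_mul_xor (u v : Label) :
    pauliString u * pauliString v * pauliString (u ^^^ v) = I ^ phase u v • 1 := by
  rw [pauliString_mul, smul_mul, pauliString_mul_self]

theorem pauliString_mul_mul_xor_of_even {u v : Label} (h : Even (phase u v)) :
    pauliString u * pauliString v * pauliString (u ^^^ v) =
      (((-1) ^ (phase u v / 2) : ℤ) : ℂ) • 1 := by
  rw [pauliString_mul_mul_xor, I_pow_of_even h]

theorem commute_pauliString {u v : Label} (h : Even (phase u v)) :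
    Commute (pauliString u) (pauliString v) := by
  rw [Commute, SemiconjBy, pauliString_mul, pauliString_mul, Label.xor_comm v u,
    I_pow_eq_pow_mod (phase v u), Label.phase_swap_mod_four_of_even h, ← I_pow_eq_pow_mod]

theorem trace_pauliString (u : Label) : (pauliString u).trace = if u = 0 then 4 else 0 := by
  obtain ⟨a, b⟩ := u
  rw [pauliString, trace_kronecker, trace_pauli, trace_pauli]
  by_cases ha : a = 0 <;> by_cases hb : b = 0 <;> norm_num [ha, hb]

theorem eq_zero_of_pauliString_eq_smul_one {u : Label} {c : ℂ}
    (h : pauliString u = c • 1) : u = 0 := by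
  by_contra hu
  have htr := congrArg Matrix.trace h
  rw [trace_pauliString, if_neg hu, trace_smul, trace_one] at htr
  have hc : c = 0 := by simpa using htr.symm
  have h1 := pauliString_mul_self u
  rw [h, hc, zero_smul, zero_mul] at h1
  exact zero_ne_one h1

theorem eq_of_pauliString_mul_eq_smul_one {u v : Label} {c : ℂ}
    (h : pauliString u * pauliString v = c • 1) : u = v := by
  refine Label.xor_eq_zero_iff.mp
    (eq_zero_of_pauliString_eq_smul_one (c := (I ^ phase u v)⁻¹ * c) ?_)
  rw [mul_smul, ← h, pauliString_xor]

theorem pauliString_injective : Function.Injective pauliString := fun u v h =>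
  eq_of_pauliString_mul_eq_smul_one (c := 1) (by rw [h, pauliString_mul_self, one_smul])

theorem pauliString_mul_mul_eq_smul_one {u v w : Label} {c : ℂ}
    (h : pauliString u * pauliString v * pauliString w = c • 1) :
    w = u ^^^ v ∧ c = I ^ phase u v := by
  have hw : u ^^^ v = w := by
    refine eq_of_pauliString_mul_eq_smul_one (c := (I ^ phase u v)⁻¹ * c) ?_
    rw [mul_smul, ← h, pauliString_xor, smul_mul]
  subst hw
  rw [pauliString_mul_mul_xor] at h
  exact ⟨rfl, smul_left_injective ℂ one_ne_zero h.symm⟩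

theorem mem_pauliStrings_iff {A : Matrix (Fin 2 × Fin 2) (Fin 2 × Fin 2) ℂ} :
    A ∈ pauliStrings ↔ ∃ u ≠ 0, pauliString u = A := by
  have hpauli1 : pauli1 = Set.range pauli := by
    ext P
    simp [pauli1, pauli]
    tauto
  constructor
  · rintro ⟨⟨P, hP, Q, hQ, rfl⟩, hne⟩
    rw [hpauli1] at hP hQ
    obtain ⟨a, rfl⟩ := hP
    obtain ⟨b, rfl⟩ := hQ
    exact ⟨(a, b), fun h => hne (by rw [one_kronecker_one, ← pauliString_zero, ← h]; rfl), rfl⟩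
  · rintro ⟨u, hu, rfl⟩
    refine ⟨⟨_, hpauli1 ▸ ⟨u.1, rfl⟩, _, hpauli1 ▸ ⟨u.2, rfl⟩, rfl⟩, fun h => hu ?_⟩
    exact pauliString_injective (h.trans (one_kronecker_one.trans pauliString_zero.symm))

theorem IsPauliLine.subset_pauliStrings {L : Set (Matrix (Fin 2 × Fin 2) (Fin 2 × Fin 2) ℂ)}
    (h : IsPauliLine L) : L ⊆ pauliStrings := by
  obtain ⟨P, Q, R, hP, hQ, hR, -, -, -, rfl, -⟩ := h
  rintro A (rfl | rfl | rfl) <;> assumption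

/-- The lines `{u, v, u ^^^ v}` spanned by two distinct commuting Pauli strings (commuting
means `Even (phase u v)`), each paired with its sign, see `pauliString_mul_mul_xor_of_even`. -/
def signedLines : Finset (Finset Label × ℤ) :=
  ((univ : Finset (Label × Label)).filter fun p =>
      p.1 ≠ 0 ∧ p.2 ≠ 0 ∧ p.1 ≠ p.2 ∧ Even (phase p.1 p.2)).image
    fun p => ({p.1, p.2, p.1 ^^^ p.2}, (-1) ^ (phase p.1 p.2 / 2))

theorem mem_signedLines {p : Finset Label × ℤ} :
    p ∈ signedLines ↔ ∃ u v : Label, u ≠ 0 ∧ v ≠ 0 ∧ u ≠ v ∧ Even (phase u v) ∧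
      (({u, v, u ^^^ v}, (-1) ^ (phase u v / 2)) : Finset Label × ℤ) = p := by
  simp [signedLines, and_assoc]

theorem ne_zero_of_mem_signedLines : ∀ p ∈ signedLines, ∀ u ∈ p.1, u ≠ 0 := by
  decide +kernel

theorem eq_of_mem_signedLines_of_fst_eq :
    ∀ p ∈ signedLines, ∀ q ∈ signedLines, p.1 = q.1 → p = q := by
  decide +kernel

theorem filter_one_ne_signedLines :
    {p ∈ signedLines | 1 ≠ p.2} =
      {({(1, 1), (2, 2), (3, 3)}, -1), ({(1, 2), (2, 3), (3, 1)}, -1),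
        ({(1, 3), (2, 1), (3, 2)}, -1)} := by
  decide +kernel

theorem isPauliLine_of_mem_signedLines {p : Finset Label × ℤ} (hp : p ∈ signedLines) :
    IsPauliLine (pauliString '' p.1) := by
  obtain ⟨u, v, hu, hv, huv, heven, rfl⟩ := mem_signedLines.mp hp
  have hc := commute_pauliString heven
  refine ⟨pauliString u, pauliString v, pauliString (u ^^^ v),
    mem_pauliStrings_iff.mpr ⟨u, hu, rfl⟩, mem_pauliStrings_iff.mpr ⟨v, hv, rfl⟩,
    mem_pauliStrings_iff.mpr ⟨_, Label.xor_ne_zero huv, rfl⟩,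
    pauliString_injective.ne huv, pauliString_injective.ne (Label.xor_ne_left hv).symm,
    pauliString_injective.ne (Label.xor_ne_right hu).symm, by simp [Set.image_insert_eq], hc,
    ?_, ?_, _, ?_, pauliString_mul_mul_xor_of_even heven⟩
  · rw [pauliString_xor]
    exact ((Commute.refl _).mul_right hc).smul_right _
  · rw [pauliString_xor]
    exact (hc.symm.mul_right (Commute.refl _)).smul_right _
  · rcases neg_one_pow_eq_or ℤ (phase u v / 2) with h | h <;> simp [h]

theorem violates_of_mem_signedLines (ν : Matrix (Fin 2 × Fin 2) (Fin 2 × Fin 2) ℂ → ℤ)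
    {p : Finset Label × ℤ} (hp : p ∈ signedLines) (h : ∏ u ∈ p.1, ν (pauliString u) ≠ p.2) :
    Violates ν (pauliString '' p.1) := by
  obtain ⟨u, v, hu, hv, huv, heven, rfl⟩ := mem_signedLines.mp hp
  refine ⟨pauliString u, pauliString v, pauliString (u ^^^ v), _, by simp [Set.image_insert_eq],
    pauliString_injective.ne huv, pauliString_injective.ne (Label.xor_ne_left hv).symm,
    pauliString_injective.ne (Label.xor_ne_right hu).symm,
    pauliString_mul_mul_xor_of_even heven, ?_⟩
  rwa [Label.prod_insert_insert_xor _ hu hv huv] at h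

theorem exists_mem_signedLines_of_violates {ν : Matrix (Fin 2 × Fin 2) (Fin 2 × Fin 2) ℂ → ℤ}
    {L : Set (Matrix (Fin 2 × Fin 2) (Fin 2 × Fin 2) ℂ)} (hL : L ⊆ pauliStrings)
    (h : Violates ν L) :
    ∃ p ∈ signedLines, ∏ u ∈ p.1, ν (pauliString u) ≠ p.2 ∧ pauliString '' p.1 = L := by
  obtain ⟨A, B, C, ε, rfl, hAB, -, -, hprod, hν⟩ := h
  obtain ⟨u, hu, rfl⟩ := mem_pauliStrings_iff.mp (hL (by simp : A ∈ _))
  obtain ⟨v, hv, rfl⟩ := mem_pauliStrings_iff.mp (hL (by simp : B ∈ _))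
  obtain ⟨w, -, rfl⟩ := mem_pauliStrings_iff.mp (hL (by simp : C ∈ _))
  obtain ⟨rfl, hε⟩ := pauliString_mul_mul_eq_smul_one hprod
  have heven := even_of_I_pow_eq_intCast hε.symm
  have hsign : (-1) ^ (phase u v / 2) = ε := by
    exact_mod_cast (I_pow_of_even heven).symm.trans hε.symm
  have huv : u ≠ v := fun h => hAB (congrArg _ h)
  refine ⟨_, mem_signedLines.mpr ⟨u, v, hu, hv, huv, heven, rfl⟩, ?_, by simp [Set.image_insert_eq]⟩
  rwa [Label.prod_insert_insert_xor _ hu hv huv, hsign]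

theorem setOf_isPauliLine_and_violates (ν : Matrix (Fin 2 × Fin 2) (Fin 2 × Fin 2) ℂ → ℤ) :
    {L | IsPauliLine L ∧ Violates ν L} = (fun p : Finset Label × ℤ => pauliString '' p.1) ''
      ↑({p ∈ signedLines | ∏ u ∈ p.1, ν (pauliString u) ≠ p.2} : Finset _) := by
  ext L
  constructor
  · rintro ⟨hL, hv⟩
    obtain ⟨p, hp, hne, rfl⟩ := exists_mem_signedLines_of_violates hL.subset_pauliStrings hv
    exact ⟨p, mem_filter.mpr ⟨hp, hne⟩, rfl⟩
  · rintro ⟨p, hp, rfl⟩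
    obtain ⟨hp, hne⟩ := mem_filter.mp hp
    exact ⟨isPauliLine_of_mem_signedLines hp, violates_of_mem_signedLines ν hp hne⟩

theorem injOn_image_pauliString :
    Set.InjOn (fun p : Finset Label × ℤ => pauliString '' p.1) signedLines :=
  fun p hp q hq h => eq_of_mem_signedLines_of_fst_eq p hp q hq
    (coe_injective (Set.image_injective.mpr pauliString_injective h))

/-- The number of `Y` factors of `pauliString u`, which is a symmetric matrix iff this is even. -/
def numY (u : Label) : ℕ := (if u.1 = 2 then 1 else 0) + (if u.2 = 2 then 1 else 0)

def merminCenters : Finset Label := {a | Even (numY a)}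

/-- For `a ∈ merminCenters`, the Mermin–Peres square whose nine points are the strings
`P ≠ 1` for which `pauliString a * P` is symmetric. -/
def merminSquare (a : Label) : Finset (Finset Label × ℤ) :=
  {p ∈ signedLines | ∀ u ∈ p.1, Even (numY (a ^^^ u))}

theorem card_merminCenters : #merminCenters = 10 := by
  decide +kernel

theorem even_card_merminSquare_filter_mem :
    ∀ a ∈ merminCenters, ∀ u, Even #{p ∈ merminSquare a | u ∈ p.1} := by
  decide +kernel

theorem prod_merminSquare_snd : ∀ a ∈ merminCenters, ∏ p ∈ merminSquare a, p.2 = -1 := by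
  decide +kernel

theorem card_merminCenters_filter_mem_le :
    ∀ p ∈ signedLines, #{a ∈ merminCenters | p ∈ merminSquare a} ≤ 4 := by
  decide +kernel

theorem exists_mem_merminSquare_prod_ne (ν : Label → ℤ) (hν : ∀ u ≠ 0, ν u = 1 ∨ ν u = -1)
    {a : Label} (ha : a ∈ merminCenters) : ∃ p ∈ merminSquare a, ∏ u ∈ p.1, ν u ≠ p.2 := by
  refine exists_prod_ne_of_even_card _ ν (fun p hp u hu => ?_)
    (even_card_merminSquare_filter_mem a ha) (by rw [prod_merminSquare_snd a ha]; decide)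
  rcases hν u (ne_zero_of_mem_signedLines p (filter_subset _ _ hp) u hu) with h | h <;> simp [h]

theorem three_le_card_filter_prod_ne (ν : Label → ℤ) (hν : ∀ u ≠ 0, ν u = 1 ∨ ν u = -1) :
    3 ≤ #{p ∈ signedLines | ∏ u ∈ p.1, ν u ≠ p.2} := by
  have hmeet (a : Label) (ha : a ∈ merminCenters) :
      1 ≤ #{p ∈ {p ∈ signedLines | ∏ u ∈ p.1, ν u ≠ p.2} | p ∈ merminSquare a} := by
    obtain ⟨p, hp, hne⟩ := exists_mem_merminSquare_prod_ne ν hν ha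
    exact card_pos.mpr ⟨p, mem_filter.mpr ⟨mem_filter.mpr ⟨(mem_filter.mp hp).1, hne⟩, hp⟩⟩
  have := card_mul_le_card_mul (fun a p => p ∈ merminSquare a) hmeet
    fun p hp => card_merminCenters_filter_mem_le p (mem_filter.mp hp).1
  rw [card_merminCenters] at this
  omega

/-- Every `±1` assignment to the two-qubit Pauli strings violates at least 3 of the 15
Pauli lines; the all-ones assignment violates exactly the 3 lines
`{X⊗X, Y⊗Y, Z⊗Z}`, `{X⊗Y, Y⊗Z, Z⊗X}`, `{X⊗Z, Y⊗X, Z⊗Y}`. -/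
theorem stmt_14 :
    (∀ ν : Matrix (Fin 2 × Fin 2) (Fin 2 × Fin 2) ℂ → ℤ,
      (∀ P ∈ pauliStrings, ν P = 1 ∨ ν P = -1) →
      3 ≤ {L | IsPauliLine L ∧ Violates ν L}.ncard) ∧
    {L | IsPauliLine L ∧ Violates (fun _ => 1) L} =
      {({σx ⊗ₖ σx, σy ⊗ₖ σy, σz ⊗ₖ σz} : Set (Matrix (Fin 2 × Fin 2) (Fin 2 × Fin 2) ℂ)),
       {σx ⊗ₖ σy, σy ⊗ₖ σz, σz ⊗ₖ σx},
       {σx ⊗ₖ σz, σy ⊗ₖ σx, σz ⊗ₖ σy}} := by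
  refine ⟨fun ν hν => ?_, ?_⟩
  · rw [setOf_isPauliLine_and_violates,
      (injOn_image_pauliString.mono (filter_subset _ _)).ncard_image, Set.ncard_coe_finset]
    exact three_le_card_filter_prod_ne (ν ∘ pauliString)
      fun u hu => hν _ (mem_pauliStrings_iff.mpr ⟨u, hu, rfl⟩)
  · rw [setOf_isPauliLine_and_violates]
    simp only [prod_const_one, filter_one_ne_signedLines]
    simp [Set.image_insert_eq, pauliString, pauli]

end Stmt14
end

section
/- Let X, Y, Z be the Pauli matrices, ⊗ the Kronecker product, and consider the ten 8×8 matrices X⊗1⊗1, 1⊗X⊗1, 1⊗1⊗X, Y⊗1⊗1, 1⊗Y⊗1, 1⊗1⊗Y, X⊗X⊗X, Y⊗Y⊗X, Y⊗X⊗Y, X⊗Y⊗Y. Define the five lines L₁ = {X⊗1⊗1, 1⊗X⊗1, 1⊗1⊗X, X⊗X⊗X}, L₂ = {Y⊗1⊗1, 1⊗Y⊗1, 1⊗1⊗X, Y⊗Y⊗X}, L₃ = {Y⊗1⊗1, 1⊗X⊗1, 1⊗1⊗Y, Y⊗X⊗Y}, L₄ = {X⊗1⊗1, 1⊗Y⊗1,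 1⊗1⊗Y, X⊗Y⊗Y}, L₅ = {X⊗X⊗X, Y⊗Y⊗X, Y⊗X⊗Y, X⊗Y⊗Y}. Then: (i) within each line Lₖ any two elements commute; (ii) for k ∈ {1, 2, 3, 4}, the product of the four elements of Lₖ (in any order) equals 1 (the 8×8 identity); (iii) the product of the four elements of L₅ equals −1 (minus the 8×8 identity). -/
open Kronecker

namespace Stmt15

/-- The Pauli matrix `X`. -/
noncomputable def σx : Matrix (Fin 2) (Fin 2) ℂ := !![0, 1; 1, 0]

/-- The Pauli matrix `Y`. -/
noncomputable def σy : Matrix (Fin 2) (Fin 2) ℂ := !![0, -Complex.I; Complex.I, 0]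

/-- Triple Kronecker product `P ⊗ Q ⊗ R` of one-qubit matrices. -/
noncomputable def t3 (P Q R : Matrix (Fin 2) (Fin 2) ℂ) :
    Matrix ((Fin 2 × Fin 2) × Fin 2) ((Fin 2 × Fin 2) × Fin 2) ℂ :=
  P ⊗ₖ Q ⊗ₖ R

/-- The five lines of the Mermin magic pentagram. Line `4` (the fifth one) is the
"odd" line `{X⊗X⊗X, Y⊗Y⊗X, Y⊗X⊗Y, X⊗Y⊗Y}`. -/
noncomputable def pentLine : Fin 5 → Fin 4 → Matrix ((Fin 2 × Fin 2) × Fin 2) ((Fin 2 × Fin 2) × Fin 2) ℂ :=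
  ![![t3 σx 1 1, t3 1 σx 1, t3 1 1 σx, t3 σx σx σx],
    ![t3 σy 1 1, t3 1 σy 1, t3 1 1 σx, t3 σy σy σx],
    ![t3 σy 1 1, t3 1 σx 1, t3 1 1 σy, t3 σy σx σy],
    ![t3 σx 1 1, t3 1 σy 1, t3 1 1 σy, t3 σx σy σy],
    ![t3 σx σx σx, t3 σy σy σx, t3 σy σx σy, t3 σx σy σy]]

lemma hxx : σx * σx = 1 := by
  simp [σx, Matrix.mul_fin_two, Matrix.one_fin_two]

lemma hyy : σy * σy = 1 := by
  simp [σy, Matrix.mul_fin_two, Matrix.one_fin_two, Complex.I_mul_I]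

lemma hxy : σx * σy = -(σy * σx) := by
  ext i j
  fin_cases i <;> fin_cases j <;>
    simp [σx, σy, Matrix.mul_fin_two]

lemma t3_mul (P Q R P' Q' R' : Matrix (Fin 2) (Fin 2) ℂ) :
    t3 P Q R * t3 P' Q' R' = t3 (P * P') (Q * Q') (R * R') := by
  simp [t3, Matrix.mul_kronecker_mul]

lemma t3_neg₁ (P Q R : Matrix (Fin 2) (Fin 2) ℂ) : t3 (-P) Q R = -t3 P Q R := by
  have : (-P) = (-1 : ℂ) • P := by simp
  rw [this, t3, t3, Matrix.smul_kronecker, Matrix.smul_kronecker]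
  simp

lemma t3_neg₂ (P Q R : Matrix (Fin 2) (Fin 2) ℂ) : t3 P (-Q) R = -t3 P Q R := by
  have : (-Q) = (-1 : ℂ) • Q := by simp
  rw [this, t3, t3, Matrix.kronecker_smul, Matrix.smul_kronecker]
  simp

lemma t3_neg₃ (P Q R : Matrix (Fin 2) (Fin 2) ℂ) : t3 P Q (-R) = -t3 P Q R := by
  have : (-R) = (-1 : ℂ) • R := by simp
  rw [this, t3, t3, Matrix.kronecker_smul]
  simp

lemma t3_one : t3 1 1 1 = 1 := by
  simp [t3, Matrix.one_kronecker_one]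

lemma hxx' (M : Matrix (Fin 2) (Fin 2) ℂ) : σx * (σx * M) = M := by
  rw [← mul_assoc, hxx, one_mul]

lemma hyy' (M : Matrix (Fin 2) (Fin 2) ℂ) : σy * (σy * M) = M := by
  rw [← mul_assoc, hyy, one_mul]

lemma hxy' (M : Matrix (Fin 2) (Fin 2) ℂ) : σx * (σy * M) = -(σy * (σx * M)) := by
  rw [← mul_assoc, ← mul_assoc, hxy, neg_mul]

lemma perm_list (σ : Equiv.Perm (Fin 4)) : List.Perm [σ 0, σ 1, σ 2, σ 3] [0, 1, 2, 3] := by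
  have hnd : ([σ 0, σ 1, σ 2, σ 3] : List (Fin 4)).Nodup := by
    simp only [List.nodup_cons, List.mem_cons, List.mem_singleton, List.not_mem_nil,
      List.nodup_nil, and_true, List.mem_nil_iff, or_false]
    refine ⟨?_, ?_, ?_⟩ <;> simp [σ.injective.ne_iff, Fin.ext_iff] <;> omega
  have hnd' : ([0, 1, 2, 3] : List (Fin 4)).Nodup := by decide
  apply List.perm_of_nodup_nodup_toFinset_eq hnd hnd'
  have h1 : ([σ 0, σ 1, σ 2, σ 3] : List (Fin 4)).toFinset = Finset.univ := by
    apply Finset.eq_univ_of_card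
    rw [List.toFinset_card_of_nodup hnd]
    simp
  rw [h1]
  decide

lemma prod_perm {M : Type*} [Monoid M] (f : Fin 4 → M)
    (h : ∀ a b, f a * f b = f b * f a) (σ : Equiv.Perm (Fin 4)) :
    f (σ 0) * f (σ 1) * f (σ 2) * f (σ 3) = f 0 * f 1 * f 2 * f 3 := by
  have hp := (perm_list σ).map f
  have key : ∀ l : List (Fin 4), List.Pairwise (fun a b => Commute (f a) (f b)) l := by
    intro l
    induction l with
    | nil => exact List.Pairwise.nil
    | cons a t ih => exact List.Pairwise.cons (fun b _ => h a b) ih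
  have hc : (List.map f [σ 0, σ 1, σ 2, σ 3]).Pairwise Commute :=
    List.pairwise_map.mpr (key _)
  have := hp.prod_eq' hc
  simpa [mul_assoc] using this

/-- In the magic pentagram: (i) any two elements of a common line commute; (ii) the four
elements of each of the first four lines multiply, in any order, to the identity;
(iii) the four elements of the fifth line multiply, in any order, to minus the
identity. -/
theorem stmt_15 :
    (∀ k : Fin 5, ∀ a b : Fin 4, pentLine k a * pentLine k b = pentLine k b * pentLine k a) ∧
    (∀ k : Fin 5, k ≠ 4 → ∀ σ : Equiv.Perm (Fin 4),
      pentLine k (σ 0) * pentLine k (σ 1) * pentLine k (σ 2) * pentLine k (σ 3) = 1) ∧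
    (∀ σ : Equiv.Perm (Fin 4),
      pentLine 4 (σ 0) * pentLine 4 (σ 1) * pentLine 4 (σ 2) * pentLine 4 (σ 3) = -1) := by
  have hcomm : ∀ k : Fin 5, ∀ a b : Fin 4,
      pentLine k a * pentLine k b = pentLine k b * pentLine k a := by
    intro k a b
    fin_cases k <;> fin_cases a <;> fin_cases b <;>
      simp [pentLine, Matrix.vecHead, Matrix.vecTail, t3_mul, t3_neg₁, t3_neg₂, t3_neg₃, hxy, hxy', hxx, hyy, hxx', hyy', mul_assoc]
  refine ⟨hcomm, ?_, ?_⟩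
  · intro k hk σ
    rw [prod_perm _ (hcomm k) σ]
    fin_cases k <;>
      simp_all [pentLine, Matrix.vecHead, Matrix.vecTail, t3_mul, t3_neg₁, t3_neg₂, t3_neg₃, hxy, hxy', hxx, hyy, hxx', hyy', mul_assoc, t3_one]
  · intro σ
    rw [prod_perm _ (hcomm 4) σ]
    simp [pentLine, Matrix.vecHead, Matrix.vecTail, t3_mul, t3_neg₁, t3_neg₂, t3_neg₃, hxy, hxy', hxx, hyy, hxx', hyy', mul_assoc, t3_one]

end Stmt15
end

section
/- Let V be the ten-element set of three-qubit Pauli strings {X⊗1⊗1, 1⊗X⊗1, 1⊗1⊗X, Y⊗1⊗1, 1⊗Y⊗1, 1⊗1⊗Y, X⊗X⊗X, Y⊗Y⊗X, Y⊗X⊗Y, X⊗Y⊗Y} and let L₁ = {X⊗1⊗1, 1⊗X⊗1, 1⊗1⊗X, X⊗X⊗X}, L₂ = {Y⊗1⊗1, 1⊗Y⊗1, 1⊗1⊗X, Y⊗Y⊗X}, L₃ = {Y⊗1⊗1, 1⊗X⊗1, 1⊗1⊗Y, Y⊗X⊗Y}, L₄ = {X⊗1⊗1, 1⊗Y⊗1,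 1⊗1⊗Y, X⊗Y⊗Y}, L₅ = {X⊗X⊗X, Y⊗Y⊗X, Y⊗X⊗Y, X⊗Y⊗Y} be the five lines of the magic pentagram. Then there is no function ν : V → ({1, −1} : Set ℤ) such that ∏_{P ∈ Lₖ} ν(P) = 1 for each k ∈ {1, 2, 3, 4} and ∏_{P ∈ L₅} ν(P) = −1. -/
open Kronecker

namespace Stmt16

/-- The Pauli matrix `X`. -/
noncomputable def σx : Matrix (Fin 2) (Fin 2) ℂ := !![0, 1; 1, 0]

/-- The Pauli matrix `Y`. -/
noncomputable def σy : Matrix (Fin 2) (Fin 2) ℂ := !![0, -Complex.I; Complex.I, 0]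

/-- Triple Kronecker product `P ⊗ Q ⊗ R` of one-qubit matrices. -/
noncomputable def t3 (P Q R : Matrix (Fin 2) (Fin 2) ℂ) :
    Matrix ((Fin 2 × Fin 2) × Fin 2) ((Fin 2 × Fin 2) × Fin 2) ℂ :=
  P ⊗ₖ Q ⊗ₖ R

/-- The ten vertices of the Mermin magic pentagram. -/
noncomputable def pentVertices : Set (Matrix ((Fin 2 × Fin 2) × Fin 2) ((Fin 2 × Fin 2) × Fin 2) ℂ) :=
  {t3 σx 1 1, t3 1 σx 1, t3 1 1 σx, t3 σy 1 1, t3 1 σy 1, t3 1 1 σy,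
   t3 σx σx σx, t3 σy σy σx, t3 σy σx σy, t3 σx σy σy}

/-- There is no `±1` assignment `ν` to the ten vertices of the magic pentagram whose
product along each of the four "even" lines is `1` and whose product along the fifth
line `{X⊗X⊗X, Y⊗Y⊗X, Y⊗X⊗Y, X⊗Y⊗Y}` is `−1`. -/
theorem stmt_16 :
    ¬ ∃ ν : Matrix ((Fin 2 × Fin 2) × Fin 2) ((Fin 2 × Fin 2) × Fin 2) ℂ → ℤ,
      (∀ P ∈ pentVertices, ν P = 1 ∨ ν P = -1) ∧
      ν (t3 σx 1 1) * ν (t3 1 σx 1) * ν (t3 1 1 σx) * ν (t3 σx σx σx) = 1 ∧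
      ν (t3 σy 1 1) * ν (t3 1 σy 1) * ν (t3 1 1 σx) * ν (t3 σy σy σx) = 1 ∧
      ν (t3 σy 1 1) * ν (t3 1 σx 1) * ν (t3 1 1 σy) * ν (t3 σy σx σy) = 1 ∧
      ν (t3 σx 1 1) * ν (t3 1 σy 1) * ν (t3 1 1 σy) * ν (t3 σx σy σy) = 1 ∧
      ν (t3 σx σx σx) * ν (t3 σy σy σx) * ν (t3 σy σx σy) * ν (t3 σx σy σy) = -1 := by
  rintro ⟨ν, hpm, h1, h2, h3, h4, h5⟩
  have sq : ∀ P ∈ pentVertices, ν P * ν P = 1 := by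
    intro P hP
    rcases hpm P hP with h | h <;> rw [h] <;> norm_num
  have sa := sq (t3 σx 1 1) (by simp [pentVertices])
  have sb := sq (t3 1 σx 1) (by simp [pentVertices])
  have sc := sq (t3 1 1 σx) (by simp [pentVertices])
  have sd := sq (t3 σy 1 1) (by simp [pentVertices])
  have se := sq (t3 1 σy 1) (by simp [pentVertices])
  have sf := sq (t3 1 1 σy) (by simp [pentVertices])
  have key : ν (t3 σx σx σx) * ν (t3 σy σy σx) * ν (t3 σy σx σy) * ν (t3 σx σy σy) = 1 := by
    calc ν (t3 σx σx σx) * ν (t3 σy σy σx) * ν (t3 σy σx σy) * ν (t3 σx σy σy)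
        = (ν (t3 σx 1 1) * ν (t3 σx 1 1)) * (ν (t3 1 σx 1) * ν (t3 1 σx 1)) *
          (ν (t3 1 1 σx) * ν (t3 1 1 σx)) * (ν (t3 σy 1 1) * ν (t3 σy 1 1)) *
          (ν (t3 1 σy 1) * ν (t3 1 σy 1)) * (ν (t3 1 1 σy) * ν (t3 1 1 σy)) *
          (ν (t3 σx σx σx) * ν (t3 σy σy σx) * ν (t3 σy σx σy) * ν (t3 σx σy σy)) := by
          rw [sa, sb, sc, sd, se, sf]; ring
      _ = (ν (t3 σx 1 1) * ν (t3 1 σx 1) * ν (t3 1 1 σx) * ν (t3 σx σx σx)) *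
          (ν (t3 σy 1 1) * ν (t3 1 σy 1) * ν (t3 1 1 σx) * ν (t3 σy σy σx)) *
          (ν (t3 σy 1 1) * ν (t3 1 σx 1) * ν (t3 1 1 σy) * ν (t3 σy σx σy)) *
          (ν (t3 σx 1 1) * ν (t3 1 σy 1) * ν (t3 1 1 σy) * ν (t3 σx σy σy)) := by ring
      _ = 1 := by rw [h1, h2, h3, h4]; norm_num
  omega

end Stmt16
end

section
/- Let n ≥ 1 and let A be an n×n matrix over ZMod 2 that is upper unitriangular, i.e., A i i = 1 for all i and A i j = 0 whenever i > j. For i < j let E(i, j) := 1 + Matrix.stdBasisMatrix i j 1 (the identity matrix with an extra 1 in entry (i, j)); this is the matrix of the CNOT gate from bit j to bit i. Then A = E_{n−1} * E_{n−2} * ⋯ * E_1, where for each i the factor E_i := ∏_{j = i+1}^{n} E(i, j)^{A i j} (the factors of each E_i pairwise commute, so this inner product is well-defined). -/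
namespace Stmt17

/-- The CNOT (transvection) matrix `E(i, j)`: the identity with an extra `1` in entry
`(i, j)`. -/
def E {n : ℕ} (i j : Fin n) : Matrix (Fin n) (Fin n) (ZMod 2) :=
  1 + Matrix.single i j 1

/-- The row factor `E_i := ∏_{j > i} E(i, j)^(A i j)`, the product (in increasing order
of `j`, though the factors commute) of those `E(i, j)` with `A i j = 1`. -/
def Erow {n : ℕ} (A : Matrix (Fin n) (Fin n) (ZMod 2)) (i : Fin n) :
    Matrix (Fin n) (Fin n) (ZMod 2) :=
  (((List.finRange n).filter fun j => i < j).map fun j => if A i j = 1 then E i j else 1).prod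

/-! Write `Erow A i = 1 + N_i`, where `N_i = ∑_{j > i} single i j (A i j)`: any two summands of
`N_i` multiply to zero, so the product of the factors `1 + single i j (A i j)` collapses to this
sum. Left multiplication by `Erow A i` adds `∑_{j > i} A i j • (row j)` to row
`i`, so applied to a matrix whose rows `j > i` are still identity rows it replaces row `i` by the
`i`-th row of `A` (using unitriangularity). Hence the partial products `E_{m-1} ⋯ E_0` agree with
`A` in the first `m` rows and with the identity below, and `m = n` gives `A`. -/

open Matrix

theorem prod_map_one_add_of_mul_eq_zero {ι R : Type*} [Semiring R] (f : ι → R) (L : List ι)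
    (h : ∀ a ∈ L, ∀ b ∈ L, f a * f b = 0) :
    (L.map fun a => 1 + f a).prod = 1 + (L.map f).sum := by
  induction L with
  | nil => simp
  | cons a L ih =>
    have hL : ∀ b ∈ L, ∀ c ∈ L, f b * f c = 0 := fun b hb c hc =>
      h b (List.mem_cons_of_mem a hb) c (List.mem_cons_of_mem a hc)
    have ha : f a * (L.map f).sum = 0 := by
      rw [← List.sum_map_mul_left]
      exact List.sum_eq_zero fun x hx => by
        obtain ⟨b, hb, rfl⟩ := List.mem_map.mp hx
        exact h a List.mem_cons_self b (List.mem_cons_of_mem a hb)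
    rw [List.map_cons, List.prod_cons, ih hL, List.map_cons, List.sum_cons, mul_add, add_mul,
      add_mul, ha]
    noncomm_ring

theorem single_mul_eq_of_row_eq {l m n α : Type*} [Fintype m] [DecidableEq l] [DecidableEq m]
    [NonUnitalNonAssocSemiring α] (i : l) (j : m) (c : α) {M M' : Matrix m n α}
    (h : M j = M' j) : single i j c * M = single i j c * M' := by
  ext a b
  by_cases ha : a = i
  · subst ha
    simp [h]
  · simp [single_mul_apply_of_ne _ _ _ _ _ ha]

theorem E_mul_comm {n : ℕ} {i j j' : Fin n} (hj : j ≠ i) (hj' : j' ≠ i) :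
    E i j * E i j' = E i j' * E i j := by
  have h₁ : single i j (1 : ZMod 2) * single i j' 1 = 0 := single_mul_single_of_ne _ _ _ _ hj _
  have h₂ : single i j' (1 : ZMod 2) * single i j 1 = 0 := single_mul_single_of_ne _ _ _ _ hj' _
  simp only [E, add_mul, mul_add, one_mul, mul_one, h₁, h₂]
  abel

theorem ite_E_eq_one_add_single {n : ℕ} (i j : Fin n) (a : ZMod 2) :
    (if a = 1 then E i j else 1) = 1 + single i j a := by
  obtain rfl | rfl : a = 0 ∨ a = 1 := by decide +revert
  · simp
  · simp [E]

theorem Erow_eq_one_add_sum {n : ℕ} (A : Matrix (Fin n) (Fin n) (ZMod 2)) (i : Fin n) :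
    Erow A i = 1 + ∑ j ∈ Finset.Ioi i, single i j (A i j) := by
  have hzero : ∀ a ∈ (List.finRange n).filter (i < ·), ∀ b ∈ (List.finRange n).filter (i < ·),
      single i a (A i a) * single i b (A i b) = 0 := fun a ha _ _ =>
    single_mul_single_of_ne (h := (show i < a by simpa using ha).ne') ..
  rw [Erow, List.map_congr_left fun j _ => ite_E_eq_one_add_single i j (A i j),
    prod_map_one_add_of_mul_eq_zero _ _ hzero,
    ← List.sum_toFinset _ ((List.nodup_finRange n).filter _), List.toFinset_filter,
    List.toFinset_finRange]
  congr 2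
  ext j; simp

def topRows {n : ℕ} (A : Matrix (Fin n) (Fin n) (ZMod 2)) (m : ℕ) :
    Matrix (Fin n) (Fin n) (ZMod 2) :=
  of fun r c => if (r : ℕ) < m then A r c else (1 : Matrix (Fin n) (Fin n) (ZMod 2)) r c

theorem topRows_of_le {n : ℕ} (A : Matrix (Fin n) (Fin n) (ZMod 2)) {m : ℕ} (hm : n ≤ m) :
    topRows A m = A := by
  ext r c
  simp [topRows, show (r : ℕ) < m by omega]

theorem Erow_mul_topRows {n : ℕ} {A : Matrix (Fin n) (Fin n) (ZMod 2)}
    (hdiag : ∀ i, A i i = 1) (hlow : ∀ i j : Fin n, j < i → A i j = 0) (i : Fin n) :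
    Erow A i * topRows A i = topRows A (i + 1) := by
  have hrow : ∀ j ∈ Finset.Ioi i, single i j (A i j) * topRows A i = single i j (A i j) := by
    intro j hj
    refine (single_mul_eq_of_row_eq _ _ _ (funext fun c => ?_)).trans (mul_one _)
    have : ¬ j < i := (Finset.mem_Ioi.mp hj).not_gt
    simp [topRows, this]
  have hN : ∀ r c, (∑ j ∈ Finset.Ioi i, single i j (A i j)) r c
      = if r = i ∧ i < c then A i c else 0 := by
    intro r c
    by_cases hr : r = i
    · simp [Matrix.sum_apply, single_apply, hr, eq_comm]
    · simp [Matrix.sum_apply, hr, Ne.symm hr]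
  rw [Erow_eq_one_add_sum, add_mul, one_mul, Finset.sum_mul, Finset.sum_congr rfl hrow]
  ext r c
  rw [Matrix.add_apply, hN]
  by_cases hr : r = i
  · subst hr
    rcases lt_trichotomy c r with hc | rfl | hc
    · simp [topRows, one_apply, hc.ne', hc.not_gt, hlow r c hc]
    · simp [topRows, hdiag]
    · simp [topRows, one_apply, hc, hc.ne]
  · simp [topRows, hr, le_iff_lt_or_eq, Fin.val_eq_val]

theorem prod_Erow_take_reverse {n : ℕ} {A : Matrix (Fin n) (Fin n) (ZMod 2)}
    (hdiag : ∀ i, A i i = 1) (hlow : ∀ i j : Fin n, j < i → A i j = 0) {m : ℕ} (hm : m ≤ n) :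
    (((List.finRange n).take m).reverse.map (Erow A)).prod = topRows A m := by
  induction m with
  | zero =>
    ext r c
    simp [topRows]
  | succ m ih =>
    have hget : (List.finRange n)[m]? = some ⟨m, hm⟩ := by
      rw [List.getElem?_eq_getElem (by simpa using hm), List.getElem_finRange]; rfl
    rw [List.take_add_one, hget, Option.toList_some, List.reverse_append, List.reverse_singleton,
      List.singleton_append, List.map_cons, List.prod_cons, ih (by omega)]
    exact Erow_mul_topRows hdiag hlow ⟨m, hm⟩

theorem stmt_17_general (n : ℕ) (A : Matrix (Fin n) (Fin n) (ZMod 2))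
    (hdiag : ∀ i, A i i = 1) (hlow : ∀ i j : Fin n, j < i → A i j = 0) :
    (∀ i j j' : Fin n, i < j → i < j' → E i j * E i j' = E i j' * E i j) ∧
    A = ((List.finRange n).reverse.map (Erow A)).prod := by
  refine ⟨fun i j j' hj hj' => E_mul_comm hj.ne' hj'.ne', ?_⟩
  have h := prod_Erow_take_reverse hdiag hlow le_rfl
  rwa [List.take_of_length_le (by simp), topRows_of_le A le_rfl, eq_comm] at h

/-- Any upper unitriangular matrix over `𝔽₂` factors as the product of its row factors,
taken from the last row to the first: `A = E_{n−1} * E_{n−2} * ⋯ * E_1`; moreover the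
factors of each `E_i` pairwise commute. -/
theorem stmt_17 (n : ℕ) (hn : 1 ≤ n) (A : Matrix (Fin n) (Fin n) (ZMod 2))
    (hdiag : ∀ i, A i i = 1) (hlow : ∀ i j : Fin n, j < i → A i j = 0) :
    (∀ i j j' : Fin n, i < j → i < j' → E i j * E i j' = E i j' * E i j) ∧
    A = ((List.finRange n).reverse.map (Erow A)).prod :=
  stmt_17_general n A hdiag hlow

end Stmt17
end
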